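/- arXiv:2102.05158 — 8 statements merged into one kernel-verified Lean document; each statement's English description precedes it below -/
import Mathlib

section
/- Let m, u, t, w be rational numbers with t ≠ 0 satisfying the Heron condition w² = 4m(mu²−m−2u)(mt²−2t−m)·((mu²−m−2u)t² + (2−4mu−2u²)t − mu² + m + 2u). Set n = m(m²+1)(2u−m(u²−1)) and x = ((2u−m(u²−1))/(4t²))·(−4(mu−1)(m+u)mt + 2(m²u²+m²−2mu+2)mt² + 2(2u−m(u²−1))m² + mw). Then there exists a rational number y with y² = x(x−n)(x−n(u²+1)); that is, x is the x-coordinate of a rational point on the angle-parametrized Heron curve E_{m,u}. -/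
/-!
With `k = m q`, `q = 2u - m(u² - 1)`, the substitution `x = k X`, `y = k Y` maps the quadratic twist
`Y² = k X (X - (m² + 1)) (X - (m² + 1)(u² + 1))` to `E_{m,u}`. This twist has the
rational point `X₀ = (m² + 1)(m + u)² / k`, `Y₀ = (mu - 1)(m + u)(X₀ - (m² + 1))`. The line through it
of slope `(mu - 1)(m + u) - k / t` meets the twist in two further points, conjugate over `ℚ(t)`:
their `X`-coordinates are `S / (2t)²` with `S = ±w + 2mq - 4(mu - 1)(m + u)t + 2(m²u² + m² - 2mu + 2)t²`,
where `w²` is the Heron quartic in `t`. So a rational `w` gives a rational point, and `x = k S / (2t)²`.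
-/

theorem sq_div_cube_eq_of_homogeneous {K : Type*} [Field K] {d M N k a b : K} (hd : d ≠ 0)
    (h : M ^ 2 = k * N * (N - a * d ^ 2) * (N - b * d ^ 2)) :
    (M / d ^ 3) ^ 2 = k * (N / d ^ 2) * (N / d ^ 2 - a) * (N / d ^ 2 - b) := by
  field_simp
  linear_combination h

theorem sq_eq_of_twist {R : Type*} [CommRing R] {X Y k a b : R}
    (h : Y ^ 2 = k * X * (X - a) * (X - b)) :
    (k * Y) ^ 2 = k * X * (k * X - k * a) * (k * X - k * b) := by
  linear_combination k ^ 2 * h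

/-- The point `X = S / (2t)²`, `Y = ((mu - 1)(m + u) - m q / t) X + (m² + 1)(m + u)((m + u) / t - (mu - 1))`
of the chord lies on the twist; here with the denominators `(2t)²` and `(2t)³` cleared. -/
theorem heron_chord {R : Type*} [CommRing R] {m u t w q S : R}
    (hH : w ^ 2 = 4 * m * (m * u ^ 2 - m - 2 * u) * (m * t ^ 2 - 2 * t - m) *
      ((m * u ^ 2 - m - 2 * u) * t ^ 2 + (2 - 4 * m * u - 2 * u ^ 2) * t
        - m * u ^ 2 + m + 2 * u))
    (hq : q = 2 * u - m * (u ^ 2 - 1))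
    (hS : S = w + 2 * m * q - 4 * (m * u - 1) * (m + u) * t
      + 2 * (m ^ 2 * u ^ 2 + m ^ 2 - 2 * m * u + 2) * t ^ 2) :
    (2 * ((m * u - 1) * (m + u) * t - m * q) * S
        + 8 * (m ^ 2 + 1) * (m + u) * t ^ 2 * (m + u - (m * u - 1) * t)) ^ 2
      = m * q * S * (S - (m ^ 2 + 1) * (2 * t) ^ 2)
          * (S - (m ^ 2 + 1) * (u ^ 2 + 1) * (2 * t) ^ 2) := by
  subst hq hS
  -- both sides are cubic in `w`; the multiplier is the quotient of their difference by `w²` minus the quartic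
  linear_combination (4 * ((m * u - 1) * (m + u) * t - m * (2 * u - m * (u ^ 2 - 1))) ^ 2
    - m * (2 * u - m * (u ^ 2 - 1)) * (w + 3 * (2 * m * (2 * u - m * (u ^ 2 - 1))
      - 4 * (m * u - 1) * (m + u) * t + 2 * (m ^ 2 * u ^ 2 + m ^ 2 - 2 * m * u + 2) * t ^ 2)
      - 4 * t ^ 2 * (m ^ 2 + 1) * (u ^ 2 + 2))) * hH

/-- a rational solution of the Heron condition (for area parameter `m`
and angle parameter `u`) yields, via the change of variables for `x`, the
x-coordinate of a rational point on the angle-parametrized Heron curve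
`E_{m,u} : y² = x(x−n)(x−n(u²+1))` with `n = m(m²+1)(2u−m(u²−1))`. -/
theorem heron_angle_to_curve (m u t w : ℚ) (ht : t ≠ 0)
    (hH : w ^ 2 = 4 * m * (m * u ^ 2 - m - 2 * u) * (m * t ^ 2 - 2 * t - m) *
      ((m * u ^ 2 - m - 2 * u) * t ^ 2 + (2 - 4 * m * u - 2 * u ^ 2) * t
        - m * u ^ 2 + m + 2 * u))
    (n x : ℚ)
    (hn : n = m * (m ^ 2 + 1) * (2 * u - m * (u ^ 2 - 1)))
    (hx : x = (2 * u - m * (u ^ 2 - 1)) / (4 * t ^ 2) *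
      (-4 * (m * u - 1) * (m + u) * m * t
        + 2 * (m ^ 2 * u ^ 2 + m ^ 2 - 2 * m * u + 2) * m * t ^ 2
        + 2 * (2 * u - m * (u ^ 2 - 1)) * m ^ 2 + m * w)) :
    ∃ y : ℚ, y ^ 2 = x * (x - n) * (x - n * (u ^ 2 + 1)) := by
  set q := 2 * u - m * (u ^ 2 - 1) with hq
  set S := w + 2 * m * q - 4 * (m * u - 1) * (m + u) * t
    + 2 * (m ^ 2 * u ^ 2 + m ^ 2 - 2 * m * u + 2) * t ^ 2 with hS
  have hpoint := sq_eq_of_twist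
    (sq_div_cube_eq_of_homogeneous (mul_ne_zero two_ne_zero ht) (heron_chord hH hq hS))
  have hx' : x = m * q * (S / (2 * t) ^ 2) := by
    rw [hx, hS]
    field_simp
    ring
  refine ⟨_, hpoint.trans ?_⟩
  rw [hx', hn]
  ring
end

section
/- Let K = ℚ(m,u) be the fraction field of the polynomial ring in two indeterminates m, u over ℚ, and set N = m(m²+1)(2u−m(u²−1)). On the elliptic curve E over K given by y² = x(x−N)(x−N(u²+1)), the point P = ((m²+1)(m+u)², u²(m²+1)²(m+u)(mu−1)) is a K-rational point, and P has infinite order in the group of K-rational points: for every integer k ≥ 1, k•P is not the identity element O. -/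
noncomputable section

/-- `K = ℚ(m, u)`, the fraction field of the polynomial ring in two variables over `ℚ`. -/
abbrev K2 : Type := FractionRing (MvPolynomial (Fin 2) ℚ)

/-- The variable `m` in `K = ℚ(m, u)`. -/
def m2 : K2 := algebraMap (MvPolynomial (Fin 2) ℚ) K2 (MvPolynomial.X 0)

/-- The variable `u` in `K = ℚ(m, u)`. -/
def u2 : K2 := algebraMap (MvPolynomial (Fin 2) ℚ) K2 (MvPolynomial.X 1)

/-- `N = m(m²+1)(2u − m(u²−1))`. -/
def N2 : K2 := m2 * (m2 ^ 2 + 1) * (2 * u2 - m2 * (u2 ^ 2 - 1))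

/-- The angle-parametrized Heron curve `E : y² = x(x−N)(x−N(u²+1))` over `ℚ(m, u)`. -/
def E2 : WeierstrassCurve.Affine K2 :=
  { a₁ := 0
    a₂ := -(N2 + N2 * (u2 ^ 2 + 1))
    a₃ := 0
    a₄ := N2 * (N2 * (u2 ^ 2 + 1))
    a₆ := 0 }

/-!
Two-descent. If `e` is a root of the cubic `f` in `y² = f(x)` and `χ` is a quadratic character
of `Kˣ`, then `P ↦ χ(x(P) - e)` is a homomorphism `E(K) → ℤ/2`, because for three collinear
points the product `(x₁ - e)(x₂ - e)(x₃ - e)` is the square of the line evaluated at `e`.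
For `χ` take the parity of the order of vanishing along `m = i` or along `m = 0`.
Since `x(P) = (m² + 1)(m + u)²`, the map for `e = 0` along `m = i` sends `P` to `1`, so a torsion
`P` has even order `2n`, and `nP` is a 2-torsion point `(e, 0)` with `e ∈ {0, N, N(u² + 1)}`.
Each of the three cases contradicts `φ(nP) = n φ(P)` for one of the maps.
-/

open Polynomial
open scoped nonZeroDivisors

local notation "ℚ[m,u]" => MvPolynomial (Fin 2) ℚ

local notation "ℂ[u][m]" => (MvPolynomial (Fin 1) ℂ)[X]

section PadicOrd

variable {R K : Type*} [CommRing R] [IsDomain R] [WfDvdMonoid R] [Field K] [Algebra R K]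
  [IsFractionRing R K] {p : R}

lemma Prime.multiplicity_mul_of_ne_zero (hp : Prime p) {a b : R} (ha : a ≠ 0) (hb : b ≠ 0) :
    multiplicity p (a * b) = multiplicity p a + multiplicity p b :=
  multiplicity_mul hp (FiniteMultiplicity.of_prime_left hp (mul_ne_zero ha hb))

variable (K) in
def padicOrd (p : R) (z : K) : ℤ :=
  multiplicity p (IsLocalization.sec R⁰ z).1 - multiplicity p ((IsLocalization.sec R⁰ z).2 : R)

lemma padicOrd_div (hp : Prime p) {a b : R} (ha : a ≠ 0) (hb : b ≠ 0) :
    padicOrd K p (algebraMap R K a / algebraMap R K b) =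
      multiplicity p a - multiplicity p b := by
  have hs := IsLocalization.sec_spec R⁰ (algebraMap R K a / algebraMap R K b)
  rw [padicOrd]
  generalize IsLocalization.sec R⁰ (algebraMap R K a / algebraMap R K b) = s at hs ⊢
  obtain ⟨a', b'⟩ := s
  dsimp only at hs ⊢
  have hb' : (b' : R) ≠ 0 := nonZeroDivisors.coe_ne_zero b'
  have hbK : algebraMap R K b ≠ 0 := (map_ne_zero_iff _ (IsFractionRing.injective R K)).2 hb
  have hcross : a * b' = a' * b := by
    apply IsFractionRing.injective R K
    rw [map_mul, map_mul, ← hs]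
    field_simp
  have ha' : a' ≠ 0 := by
    rintro rfl
    simp [ha, hb'] at hcross
  have := congrArg (multiplicity p) hcross
  rw [hp.multiplicity_mul_of_ne_zero ha hb', hp.multiplicity_mul_of_ne_zero ha' hb] at this
  omega

lemma padicOrd_mul (hp : Prime p) {z w : K} (hz : z ≠ 0) (hw : w ≠ 0) :
    padicOrd K p (z * w) = padicOrd K p z + padicOrd K p w := by
  obtain ⟨a, b, hb, rfl⟩ := IsFractionRing.div_surjective R z
  obtain ⟨c, d, hd, rfl⟩ := IsFractionRing.div_surjective R w
  have hb0 := nonZeroDivisors.ne_zero hb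
  have hd0 := nonZeroDivisors.ne_zero hd
  have ha0 : a ≠ 0 := by rintro rfl; simp at hz
  have hc0 : c ≠ 0 := by rintro rfl; simp at hw
  rw [div_mul_div_comm, ← map_mul, ← map_mul, padicOrd_div hp (mul_ne_zero ha0 hc0)
    (mul_ne_zero hb0 hd0), padicOrd_div hp ha0 hb0, padicOrd_div hp hc0 hd0,
    hp.multiplicity_mul_of_ne_zero ha0 hc0, hp.multiplicity_mul_of_ne_zero hb0 hd0]
  push_cast
  ring

lemma padicOrd_algebraMap (hp : Prime p) {a : R} (ha : a ≠ 0) :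
    padicOrd K p (algebraMap R K a) = multiplicity p a := by
  simpa [multiplicity_eq_zero.2 hp.not_dvd_one] using padicOrd_div (K := K) hp ha one_ne_zero

end PadicOrd

namespace WeierstrassCurve.Affine

variable {F : Type*} [Field F] {W : WeierstrassCurve.Affine F}

section

variable (hW₁ : W.a₁ = 0) (hW₃ : W.a₃ = 0)
include hW₁ hW₃

lemma equation_iff_of_a₁_a₃ {x y : F} :
    W.Equation x y ↔ y ^ 2 = x ^ 3 + W.a₂ * x ^ 2 + W.a₄ * x + W.a₆ := by
  simp [equation_iff, hW₁, hW₃]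

lemma nonsingular_zero_iff_of_a₁_a₃ {e : F} :
    W.Nonsingular e 0 ↔ W.Equation e 0 ∧ 3 * e ^ 2 + 2 * W.a₂ * e + W.a₄ ≠ 0 := by
  simp [nonsingular_iff, hW₁, hW₃, eq_comm]

lemma negY_of_a₁_a₃ (x y : F) : W.negY x y = -y := by
  simp [negY, hW₁, hW₃]

lemma Y_eq_zero_of_equation {e y : F} (he : W.Equation e 0) (h : W.Equation e y) : y = 0 := by
  simpa [negY, hW₁, hW₃] using Y_eq_of_X_eq h he rfl

variable [DecidableEq F]

/-- Evaluate at `e` the identity `f(X) - ℓ(X)² = ∏ (X - xᵢ)` for the line `ℓ` through the two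
points. -/
lemma sub_mul_sub_mul_addX_sub {e x₁ x₂ y₁ y₂ : F} (he : W.Equation e 0)
    (h₁ : W.Equation x₁ y₁) (h₂ : W.Equation x₂ y₂) (hxy : ¬(x₁ = x₂ ∧ y₁ = W.negY x₂ y₂)) :
    (x₁ - e) * (x₂ - e) * (W.addX x₁ x₂ (W.slope x₁ x₂ y₁ y₂) - e) =
      (W.slope x₁ x₂ y₁ y₂ * (e - x₁) + y₁) ^ 2 := by
  have h := congrArg (eval e) (addPolynomial_slope h₁ h₂ hxy)
  simp [addPolynomial, linePolynomial, polynomial, hW₁, hW₃] at h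
  rw [equation_iff_of_a₁_a₃ hW₁ hW₃] at he
  rw [addX, hW₁]
  linear_combination -h + he

lemma addX_sub_mul_sub {e x y : F} (he : W.Equation e 0) (h : W.Equation x y) (hx : x ≠ e) :
    (W.addX e x (W.slope e x 0 y) - e) * (x - e) = 3 * e ^ 2 + 2 * W.a₂ * e + W.a₄ := by
  rw [equation_iff_of_a₁_a₃ hW₁ hW₃] at he h
  rw [slope_of_X_ne hx.symm, addX, hW₁]
  field_simp
  linear_combination (x - e) * (h - he)

end

variable [DecidableEq F]

namespace Point

/-- The Kummer map `P ↦ x(P) - e ∈ Fˣ / Fˣ²` followed by `χ`. At `(e, 0)` it takes the value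
at `f'(e) = (e - e')(e - e'')`, the product of the differences to the other two roots. -/
def descentChar (χ : F → ZMod 2) (e : F) : W.Point → ZMod 2
  | .zero => 0
  | .some x _ _ => if x = e then χ (3 * e ^ 2 + 2 * W.a₂ * e + W.a₄) else χ (x - e)

variable {χ : F → ZMod 2} {e : F}

@[simp]
lemma descentChar_zero : descentChar χ e (0 : W.Point) = 0 := rfl

lemma descentChar_some {x y : F} (h : W.Nonsingular x y) :
    descentChar χ e (some x y h) =
      if x = e then χ (3 * e ^ 2 + 2 * W.a₂ * e + W.a₄) else χ (x - e) := rfl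

@[simp]
lemma descentChar_neg (P : W.Point) : descentChar χ e (-P) = descentChar χ e P := by
  rcases P with _ | ⟨x, y, h⟩ <;> rfl

lemma descentChar_some_of_ne {x y : F} (h : W.Nonsingular x y) (hx : x ≠ e) :
    descentChar χ e (some x y h) = χ (x - e) :=
  if_neg hx

lemma descentChar_some_self {y : F} (h : W.Nonsingular e y) :
    descentChar χ e (some e y h) = χ (3 * e ^ 2 + 2 * W.a₂ * e + W.a₄) :=
  if_pos rfl

variable (hW₁ : W.a₁ = 0) (hW₃ : W.a₃ = 0)
  (hχ : ∀ a b : F, a ≠ 0 → b ≠ 0 → χ (a * b) = χ a + χ b) (he : W.Equation e 0)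
include hW₁ hW₃ hχ he

lemma descentChar_add_of_X_eq {x y : F} (h : W.Nonsingular x y) (hx : x = e) (Q : W.Point) :
    descentChar χ e (some x y h + Q) = descentChar χ e (some x y h) + descentChar χ e Q := by
  subst hx
  obtain rfl := Y_eq_zero_of_equation hW₁ hW₃ he h.1
  have hde := ((nonsingular_zero_iff_of_a₁_a₃ hW₁ hW₃).1 h).2
  rcases Q with _ | ⟨x₂, y₂, h₂⟩
  · simp [← zero_def]
  by_cases hx₂ : x₂ = x
  · subst hx₂
    obtain rfl := Y_eq_zero_of_equation hW₁ hW₃ he h₂.1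
    rw [add_of_Y_eq rfl (by simp [negY, hW₁, hW₃])]
    simp [descentChar_some, CharTwo.add_self_eq_zero]
  rw [add_of_X_ne (Ne.symm hx₂)]
  have key := addX_sub_mul_sub hW₁ hW₃ he h₂.1 hx₂
  have hx₃ : W.addX x x₂ (W.slope x x₂ 0 y₂) - x ≠ 0 :=
    left_ne_zero_of_mul (key ▸ hde)
  have := hχ _ _ hx₃ (sub_ne_zero.2 hx₂)
  rw [key] at this
  simp only [descentChar_some, if_pos, if_neg hx₂, if_neg (sub_ne_zero.1 hx₃)]
  grind

lemma descentChar_add (P Q : W.Point) :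
    descentChar χ e (P + Q) = descentChar χ e P + descentChar χ e Q := by
  rcases P with _ | ⟨x₁, y₁, h₁⟩
  · simp [← zero_def]
  by_cases hx₁ : x₁ = e
  · exact descentChar_add_of_X_eq hW₁ hW₃ hχ he h₁ hx₁ Q
  rcases Q with _ | ⟨x₂, y₂, h₂⟩
  · simp [← zero_def]
  by_cases hx₂ : x₂ = e
  · rw [add_comm, add_comm (descentChar χ e _)]
    exact descentChar_add_of_X_eq hW₁ hW₃ hχ he h₂ hx₂ _
  by_cases hxy : x₁ = x₂ ∧ y₁ = W.negY x₂ y₂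
  · rw [add_of_Y_eq hxy.1 hxy.2, descentChar_some, descentChar_some, hxy.1]
    exact (CharTwo.add_self_eq_zero _).symm
  by_cases hx₃ : W.addX x₁ x₂ (W.slope x₁ x₂ y₁ y₂) = e
  · -- `P = (P + Q) + (-Q)`, and `P + Q` has abscissa `e`
    have hS := descentChar_add_of_X_eq hW₁ hW₃ hχ he (nonsingular_add h₁ h₂ hxy) hx₃
      (-some x₂ y₂ h₂)
    rw [← add_some hxy (h₁ := h₁) (h₂ := h₂), add_neg_cancel_right, descentChar_neg] at hS
    grind
  rw [add_some hxy]
  have key := sub_mul_sub_mul_addX_sub hW₁ hW₃ he h₁.1 h₂.1 hxy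
  have h₁₂ : (x₁ - e) * (x₂ - e) ≠ 0 := mul_ne_zero (sub_ne_zero.2 hx₁) (sub_ne_zero.2 hx₂)
  have hsq : W.slope x₁ x₂ y₁ y₂ * (e - x₁) + y₁ ≠ 0 := by
    intro h0
    rw [h0, zero_pow two_ne_zero] at key
    exact mul_ne_zero h₁₂ (sub_ne_zero.2 hx₃) key
  have := congrArg χ key
  rw [hχ _ _ h₁₂ (sub_ne_zero.2 hx₃), hχ _ _ (sub_ne_zero.2 hx₁) (sub_ne_zero.2 hx₂), sq,
    hχ _ _ hsq hsq] at this
  simp only [descentChar_some, if_neg hx₁, if_neg hx₂, if_neg hx₃]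
  grind

def descentHom : W.Point →+ ZMod 2 :=
  AddMonoidHom.mk' (descentChar χ e) (descentChar_add hW₁ hW₃ hχ he)

omit hχ he in
lemma Y_eq_zero_of_two_nsmul_eq_zero (h2 : (2 : F) ≠ 0) {x y : F} {h : W.Nonsingular x y}
    (hT : 2 • some x y h = 0) : y = 0 := by
  rw [two_nsmul, add_eq_zero_iff_eq_neg, neg_some, some.injEq, negY_of_a₁_a₃ hW₁ hW₃] at hT
  exact (mul_eq_zero.1 (by linear_combination hT.2 : 2 * y = 0)).resolve_left h2

end Point
end WeierstrassCurve.Affine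

lemma exists_nsmul_ne_zero_two_nsmul_eq_zero {G : Type*} [AddMonoid G] {P : G} (φ : G →+ ZMod 2)
    (hφ : φ P = 1) (hP : IsOfFinAddOrder P) : ∃ n : ℕ, n • P ≠ 0 ∧ 2 • n • P = 0 := by
  have hd : ((addOrderOf P : ℕ) : ZMod 2) = 0 := by
    simpa [hφ] using (map_nsmul φ (addOrderOf P) P).symm
  obtain ⟨n, hn⟩ := (ZMod.natCast_eq_zero_iff _ 2).1 hd
  refine ⟨n, fun h => ?_, by rw [← mul_nsmul', ← hn, addOrderOf_nsmul_eq_zero]⟩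
  have := hP.addOrderOf_pos
  have := Nat.le_of_dvd (by omega) (addOrderOf_dvd_of_nsmul_eq_zero h)
  omega

def toComplexPoly : ℚ[m,u] →+* ℂ[u][m] :=
  (MvPolynomial.finSuccEquiv ℂ 1).toRingEquiv.toRingHom.comp (MvPolynomial.map (algebraMap ℚ ℂ))

lemma toComplexPoly_injective : Function.Injective toComplexPoly :=
  (MvPolynomial.finSuccEquiv ℂ 1).injective.comp
    (MvPolynomial.map_injective _ (algebraMap ℚ ℂ).injective)

lemma eval_eval_toComplexPoly (a u : ℂ) (q : ℚ[m,u]) :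
    MvPolynomial.eval (fun _ => u) ((toComplexPoly q).eval (MvPolynomial.C a)) =
      MvPolynomial.aeval ![a, u] q := by
  have : ((MvPolynomial.eval fun _ => u).comp ((evalRingHom (MvPolynomial.C a)).comp toComplexPoly))
      = (MvPolynomial.aeval ![a, u]).toRingHom := by
    apply MvPolynomial.ringHom_ext
    · intro r; simp [toComplexPoly, MvPolynomial.finSuccEquiv_apply]
    · intro i; fin_cases i
      · simp [toComplexPoly, MvPolynomial.finSuccEquiv_X_zero]
      · have : (MvPolynomial.X 1 : MvPolynomial (Fin 2) ℂ) = MvPolynomial.X (Fin.succ 0) := rfl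
        simp [toComplexPoly, this, MvPolynomial.finSuccEquiv_X_succ]
  exact congrArg (· q) this

def toComplexRatFunc : K2 →+* FractionRing ℂ[u][m] :=
  IsFractionRing.lift (g := (algebraMap _ (FractionRing ℂ[u][m])).comp toComplexPoly)
    ((IsFractionRing.injective ℂ[u][m] _).comp toComplexPoly_injective)

lemma toComplexRatFunc_algebraMap (q : ℚ[m,u]) :
    toComplexRatFunc (algebraMap ℚ[m,u] K2 q) = algebraMap _ _ (toComplexPoly q) :=
  IsFractionRing.lift_algebraMap _ _

/-- The parity of the order of vanishing of `z ∈ ℚ(m, u)` along `m = a`, read off in `ℂ(u)(m)`. -/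
def ordParity (a : ℂ) (z : K2) : ZMod 2 :=
  padicOrd (FractionRing ℂ[u][m]) (X - C (MvPolynomial.C a) : ℂ[u][m]) (toComplexRatFunc z)

lemma ordParity_mul (a : ℂ) {z w : K2} (hz : z ≠ 0) (hw : w ≠ 0) :
    ordParity a (z * w) = ordParity a z + ordParity a w := by
  rw [ordParity, map_mul, padicOrd_mul (R := ℂ[u][m]) (prime_X_sub_C _)
    ((_root_.map_ne_zero _).2 hz) ((_root_.map_ne_zero _).2 hw), Int.cast_add]
  rfl

lemma ordParity_algebraMap (a : ℂ) {q : ℚ[m,u]} (hq : q ≠ 0) :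
    ordParity a (algebraMap ℚ[m,u] K2 q) =
      (multiplicity (X - C (MvPolynomial.C a)) (toComplexPoly q) : ZMod 2) := by
  rw [ordParity, toComplexRatFunc_algebraMap, padicOrd_algebraMap (prime_X_sub_C _)
    ((map_ne_zero_iff _ toComplexPoly_injective).2 hq), Int.cast_natCast]

lemma eval_toComplexPoly_ne_zero {a u : ℂ} {q : ℚ[m,u]}
    (h : MvPolynomial.aeval ![a, u] q ≠ 0) : (toComplexPoly q).eval (MvPolynomial.C a) ≠ 0 := by
  rw [← eval_eval_toComplexPoly] at h
  exact fun h0 => h (by rw [h0, map_zero])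

lemma ne_zero_of_aeval_ne_zero {z : K2} (q : ℚ[m,u]) (hz : algebraMap ℚ[m,u] K2 q = z)
    (v : Fin 2 → ℂ) (h : MvPolynomial.aeval v q ≠ 0) : z ≠ 0 := by
  rw [← hz, ne_eq, IsFractionRing.to_map_eq_zero_iff]
  rintro rfl
  simp at h

lemma ordParity_eq_zero {z : K2} (a u : ℂ) (q : ℚ[m,u])
    (hz : algebraMap ℚ[m,u] K2 q = z) (h : MvPolynomial.aeval ![a, u] q ≠ 0) :
    ordParity a z = 0 := by
  have hq : q ≠ 0 := by rintro rfl; simp at h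
  rw [← hz, ordParity_algebraMap a hq, multiplicity_eq_zero.2, Nat.cast_zero]
  rw [dvd_iff_isRoot]
  exact eval_toComplexPoly_ne_zero h

lemma ordParity_eq_one {z : K2} (a : ℂ) (q : ℚ[m,u]) (hz : algebraMap ℚ[m,u] K2 q = z)
    (r : ℂ[u][m]) (hq : toComplexPoly q = (X - C (MvPolynomial.C a)) * r)
    (hr : r.eval (MvPolynomial.C a) ≠ 0) : ordParity a z = 1 := by
  have hr0 : r ≠ 0 := by rintro rfl; simp at hr
  have hq0 : q ≠ 0 := by
    rintro rfl
    exact mul_ne_zero (X_sub_C_ne_zero _) hr0 (by rw [← hq, map_zero])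
  rw [← hz, ordParity_algebraMap a hq0, hq,
    (prime_X_sub_C _).multiplicity_mul_of_ne_zero (X_sub_C_ne_zero _) hr0, multiplicity_self,
    multiplicity_eq_zero.2 (by rwa [dvd_iff_isRoot])]
  rfl

lemma toComplexPoly_X_zero : toComplexPoly (MvPolynomial.X 0) = X := by
  simp [toComplexPoly, MvPolynomial.finSuccEquiv_X_zero]

lemma ordParity_zero_eq_one {z : K2} (q : ℚ[m,u])
    (hz : algebraMap ℚ[m,u] K2 (MvPolynomial.X 0 * q) = z) (u : ℂ)
    (h : MvPolynomial.aeval ![0, u] q ≠ 0) : ordParity 0 z = 1 :=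
  ordParity_eq_one 0 _ hz (toComplexPoly q) (by simp [toComplexPoly_X_zero])
    (eval_toComplexPoly_ne_zero h)

lemma ordParity_I_eq_one {z : K2} (q : ℚ[m,u])
    (hz : algebraMap ℚ[m,u] K2 ((MvPolynomial.X 0 ^ 2 + 1) * q) = z) (u : ℂ)
    (h : MvPolynomial.aeval ![Complex.I, u] q ≠ 0) : ordParity Complex.I z = 1 := by
  have hI : (C (MvPolynomial.C Complex.I) : ℂ[u][m]) ^ 2 = -1 := by
    rw [← C_pow, ← map_pow, Complex.I_sq]
    simp
  refine ordParity_eq_one _ _ hz ((X + C (MvPolynomial.C Complex.I)) * toComplexPoly q) ?_ ?_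
  · rw [map_mul, map_add, map_pow, map_one, toComplexPoly_X_zero]
    linear_combination (toComplexPoly q) * hI
  · rw [eval_mul]
    refine mul_ne_zero ?_ (eval_toComplexPoly_ne_zero h)
    rw [eval_add, eval_X, eval_C, ← map_add, ne_eq, MvPolynomial.C_eq_zero]
    simp

open WeierstrassCurve.Affine

section HeronCurve

open MvPolynomial

lemma N2_eq_algebraMap :
    N2 = algebraMap ℚ[m,u] K2 (X 0 * ((X 0 ^ 2 + 1) * (2 * X 1 - X 0 * (X 1 ^ 2 - 1)))) := by
  simp [N2, m2, u2, map_ofNat]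
  ring

lemma N2_ne_zero : N2 ≠ 0 :=
  ne_zero_of_aeval_ne_zero _ N2_eq_algebraMap.symm ![1, 1] (by norm_num)

lemma u2_sq_add_one_ne_zero : u2 ^ 2 + 1 ≠ 0 :=
  ne_zero_of_aeval_ne_zero (X 1 ^ 2 + 1) (by simp [u2]) ![0, 0] (by norm_num)

lemma E2_equation_zero_iff {x : K2} :
    E2.Equation x 0 ↔ x = 0 ∨ x = N2 ∨ x = N2 * (u2 ^ 2 + 1) := by
  have : E2.Equation x 0 ↔ x * (x - N2) * (x - N2 * (u2 ^ 2 + 1)) = 0 := by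
    rw [equation_iff]
    simp only [E2]
    constructor <;> intro h <;> linear_combination -h
  rw [this, mul_eq_zero, mul_eq_zero, sub_eq_zero, sub_eq_zero, or_assoc]

lemma heronX_eq_algebraMap :
    algebraMap ℚ[m,u] K2 ((X 0 ^ 2 + 1) * (X 0 + X 1) ^ 2) = (m2 ^ 2 + 1) * (m2 + u2) ^ 2 := by
  simp [m2, u2]

lemma heronX_ne_zero : (m2 ^ 2 + 1) * (m2 + u2) ^ 2 ≠ 0 :=
  ne_zero_of_aeval_ne_zero _ heronX_eq_algebraMap ![0, 1] (by norm_num)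

lemma E2_nonsingular_heronPoint : E2.Nonsingular ((m2 ^ 2 + 1) * (m2 + u2) ^ 2)
    (u2 ^ 2 * (m2 ^ 2 + 1) ^ 2 * (m2 + u2) * (m2 * u2 - 1)) := by
  have hy : u2 ^ 2 * (m2 ^ 2 + 1) ^ 2 * (m2 + u2) * (m2 * u2 - 1) ≠ 0 :=
    ne_zero_of_aeval_ne_zero (X 1 ^ 2 * (X 0 ^ 2 + 1) ^ 2 * (X 0 + X 1) * (X 0 * X 1 - 1))
      (by simp [m2, u2]) ![2, 1] (by norm_num)
  rw [nonsingular_iff, equation_iff]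
  refine ⟨by simp only [E2, N2]; ring, Or.inr fun h => hy ?_⟩
  simp only [E2, zero_mul, sub_zero] at h
  exact (mul_eq_zero.1 (by linear_combination h : (2 : K2) * _ = 0)).resolve_left two_ne_zero

def descentAtZero (a : ℂ) : E2.Point →+ ZMod 2 :=
  Point.descentHom rfl rfl (fun _ _ => ordParity_mul a) (E2_equation_zero_iff.2 (Or.inl rfl))

def descentAtN : E2.Point →+ ZMod 2 :=
  Point.descentHom rfl rfl (fun _ _ => ordParity_mul 0)
    (E2_equation_zero_iff.2 (Or.inr (Or.inl rfl)))

lemma descentAtZero_apply (a : ℂ) (P : E2.Point) :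
    descentAtZero a P = Point.descentChar (ordParity a) 0 P := rfl

lemma descentAtN_apply (P : E2.Point) : descentAtN P = Point.descentChar (ordParity 0) N2 P := rfl

lemma descentAtZero_heronPoint (a : ℂ) :
    descentAtZero a (.some _ _ E2_nonsingular_heronPoint) =
      ordParity a ((m2 ^ 2 + 1) * (m2 + u2) ^ 2) := by
  rw [descentAtZero_apply, Point.descentChar_some_of_ne _ heronX_ne_zero, sub_zero]

lemma descentAtZero_I_heronPoint :
    descentAtZero Complex.I (.some _ _ E2_nonsingular_heronPoint) = 1 := by
  rw [descentAtZero_heronPoint]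
  exact ordParity_I_eq_one _ heronX_eq_algebraMap 0 (by simp)

lemma descentAtZero_zero_heronPoint :
    descentAtZero 0 (.some _ _ E2_nonsingular_heronPoint) = 0 := by
  rw [descentAtZero_heronPoint]
  exact ordParity_eq_zero 0 1 _ heronX_eq_algebraMap (by norm_num)

lemma descentAtZero_I_some_zero (h : E2.Nonsingular 0 0) :
    descentAtZero Complex.I (.some 0 0 h) = 0 := by
  rw [descentAtZero_apply, Point.descentChar_some_self,
    show 3 * 0 ^ 2 + 2 * E2.a₂ * 0 + E2.a₄ = N2 * N2 * (u2 ^ 2 + 1) by simp [E2]; ring,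
    ordParity_mul _ (mul_ne_zero N2_ne_zero N2_ne_zero) u2_sq_add_one_ne_zero,
    ordParity_mul _ N2_ne_zero N2_ne_zero, CharTwo.add_self_eq_zero, zero_add]
  exact ordParity_eq_zero _ 0 (X 1 ^ 2 + 1) (by simp [u2]) (by simp)

lemma descentAtN_some_zero (h : E2.Nonsingular 0 0) : descentAtN (.some 0 0 h) = 1 := by
  rw [descentAtN_apply, Point.descentChar_some_of_ne _ N2_ne_zero.symm]
  exact ordParity_zero_eq_one (-((X 0 ^ 2 + 1) * (2 * X 1 - X 0 * (X 1 ^ 2 - 1))))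
    (by rw [N2_eq_algebraMap]; simp) 1 (by norm_num)

lemma descentAtZero_zero_some_N2 (h : E2.Nonsingular N2 0) :
    descentAtZero 0 (.some N2 0 h) = 1 := by
  rw [descentAtZero_apply, Point.descentChar_some_of_ne _ N2_ne_zero, sub_zero]
  exact ordParity_zero_eq_one _ N2_eq_algebraMap.symm 1 (by norm_num)

lemma descentAtZero_zero_some_N2_mul (h : E2.Nonsingular (N2 * (u2 ^ 2 + 1)) 0) :
    descentAtZero 0 (.some _ 0 h) = 1 := by
  rw [descentAtZero_apply,
    Point.descentChar_some_of_ne _ (mul_ne_zero N2_ne_zero u2_sq_add_one_ne_zero), sub_zero]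
  exact ordParity_zero_eq_one ((X 0 ^ 2 + 1) * (2 * X 1 - X 0 * (X 1 ^ 2 - 1)) * (X 1 ^ 2 + 1))
    (by simp [N2, m2, u2, map_ofNat]; ring) 1 (by norm_num)

end HeronCurve

/-- the point `P = ((m²+1)(m+u)², u²(m²+1)²(m+u)(mu−1))` is a
`ℚ(m,u)`-rational point of `E : y² = x(x−N)(x−N(u²+1))`, where
`N = m(m²+1)(2u−m(u²−1))`, and `P` has infinite order. -/
theorem heron_angle_point_infinite_order :
    ∃ hP : E2.Nonsingular ((m2 ^ 2 + 1) * (m2 + u2) ^ 2)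
      (u2 ^ 2 * (m2 ^ 2 + 1) ^ 2 * (m2 + u2) * (m2 * u2 - 1)),
      ∀ k : ℕ, 1 ≤ k → k • (WeierstrassCurve.Affine.Point.some _ _ hP) ≠ 0 := by
  refine ⟨E2_nonsingular_heronPoint, fun k hk hkP => ?_⟩
  obtain ⟨n, hT, h2T⟩ := exists_nsmul_ne_zero_two_nsmul_eq_zero _ descentAtZero_I_heronPoint
    (isOfFinAddOrder_iff_nsmul_eq_zero.2 ⟨k, hk, hkP⟩)
  have hφ (φ : E2.Point →+ ZMod 2) := map_nsmul φ n (.some _ _ E2_nonsingular_heronPoint)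
  rcases hnP : n • Point.some _ _ E2_nonsingular_heronPoint with _ | ⟨x, y, h⟩
  · exact hT hnP
  rw [hnP] at h2T hφ
  obtain rfl := Point.Y_eq_zero_of_two_nsmul_eq_zero rfl rfl two_ne_zero h2T
  rcases E2_equation_zero_iff.1 h.1 with rfl | rfl | rfl
  · have h₁ := hφ (descentAtZero Complex.I)
    have h₃ := hφ descentAtN
    rw [descentAtZero_I_heronPoint, descentAtZero_I_some_zero, nsmul_eq_mul, mul_one] at h₁
    rw [descentAtN_some_zero, nsmul_eq_mul, ← h₁, zero_mul] at h₃
    exact one_ne_zero h₃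
  · have h₂ := hφ (descentAtZero 0)
    rw [descentAtZero_zero_heronPoint, descentAtZero_zero_some_N2, smul_zero] at h₂
    exact one_ne_zero h₂
  · have h₂ := hφ (descentAtZero 0)
    rw [descentAtZero_zero_heronPoint, descentAtZero_zero_some_N2_mul, smul_zero] at h₂
    exact one_ne_zero h₂
end
end

section
/- Let u, v, w, Δ be rational numbers with v ≠ 0, w ≠ 0, u ≠ vw, satisfying 4u²v²w²Δ² = (uv−w)(uw−v)(vw−u)(uvw−1). Define y = 2u(v²−1)(w²−1)(v²w²−1)Δ / (vw(u−vw)²) and x = (v²−1)(w²−1)(uvw−1) / (vw(vw−u)). Then y² = x(x−(v−v⁻¹)²)(x−(w−w⁻¹)²), i.e. (x,y) is a rational point on the side-parametrized Heron curve E_{v,w}. -/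
/-!
The abscissa `x` is symmetric in `v, w`, and its translates by the two nonzero roots of the curve
factor as
`x - (v - v⁻¹)² = (v² - 1)(v²w² - 1)(uw - v) / (v²w(vw - u))`
(and symmetrically in `v, w`). Hence `x (x - (v - v⁻¹)²) (x - (w - w⁻¹)²)` is a square times the
Heron product `(uv - w)(uw - v)(vw - u)(uvw - 1)`, which the Heron condition identifies with
`4u²v²w²Δ²`; the result is exactly `y²`.
-/

namespace HeronCurve

variable {K : Type*} [Field K]

def abscissa (u v w : K) : K :=
  (v ^ 2 - 1) * (w ^ 2 - 1) * (u * v * w - 1) / (v * w * (v * w - u))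

theorem abscissa_comm (u v w : K) : abscissa u v w = abscissa u w v := by
  unfold abscissa
  ring

theorem abscissa_sub_sq_sub_inv {u v w : K} (hv : v ≠ 0) (hw : w ≠ 0) (huvw : u ≠ v * w) :
    abscissa u v w - (v - v⁻¹) ^ 2 =
      (v ^ 2 - 1) * (v ^ 2 * w ^ 2 - 1) * (u * w - v) / (v ^ 2 * w * (v * w - u)) := by
  unfold abscissa
  field_simp
  ring

theorem abscissa_mul_sub_mul_sub {u v w : K} (hv : v ≠ 0) (hw : w ≠ 0) (huvw : u ≠ v * w) :
    abscissa u v w * (abscissa u v w - (v - v⁻¹) ^ 2) * (abscissa u v w - (w - w⁻¹) ^ 2) =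
      ((v ^ 2 - 1) * (w ^ 2 - 1) * (v ^ 2 * w ^ 2 - 1)) ^ 2 *
        ((u * v - w) * (u * w - v) * (v * w - u) * (u * v * w - 1)) /
          (v ^ 4 * w ^ 4 * (v * w - u) ^ 4) := by
  have hwv : u ≠ w * v := mul_comm v w ▸ huvw
  rw [abscissa_sub_sq_sub_inv hv hw huvw, abscissa_comm u v w,
    abscissa_sub_sq_sub_inv hw hv hwv, abscissa]
  field_simp

end HeronCurve

open HeronCurve in
/-- a rational solution of the side-length Heron condition
`4u²v²w²Δ² = (uv−w)(uw−v)(vw−u)(uvw−1)` yields, via the change of variables, a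
rational point on the side-parametrized Heron curve
`E_{v,w} : y² = x(x−(v−v⁻¹)²)(x−(w−w⁻¹)²)`. -/
theorem heron_side_to_curve (u v w Δ : ℚ) (hv : v ≠ 0) (hw : w ≠ 0)
    (huvw : u ≠ v * w)
    (hH : 4 * u ^ 2 * v ^ 2 * w ^ 2 * Δ ^ 2 =
      (u * v - w) * (u * w - v) * (v * w - u) * (u * v * w - 1))
    (x y : ℚ)
    (hy : y = 2 * u * (v ^ 2 - 1) * (w ^ 2 - 1) * (v ^ 2 * w ^ 2 - 1) * Δ /
      (v * w * (u - v * w) ^ 2))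
    (hx : x = (v ^ 2 - 1) * (w ^ 2 - 1) * (u * v * w - 1) /
      (v * w * (v * w - u))) :
    y ^ 2 = x * (x - (v - v⁻¹) ^ 2) * (x - (w - w⁻¹) ^ 2) := by
  rw [show x = abscissa u v w from hx, abscissa_mul_sub_mul_sub hv hw huvw, ← hH, hy]
  field_simp
  ring
end

section
/- There are no equilateral hyperbolic Heron triangles. Equivalently, in the algebraic form established by the paper: there exist no rational numbers c, s, d with c² + s² = 1, 1/2 < c < 1, s > 0, d > 0 and d² = (2c−1)(c+1)². -/
/-!
Put `t = s / (1 + c) = tan (α / 2)`. The condition says that `(1 - 3t²)(1 + t²)` is a rational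
square, so for `t = p / q` in lowest terms `(q² - 3p²)(q² + p²)` is an integer square. If `p`, `q`
are both odd this fails modulo 8. Otherwise the two factors are coprime squares `u²`, `v²`, and
splitting `(q - u)(q + u) = 3p²` gives coprime `i`, `j` with `(9i² + j²)(i² + j²)` a square. Once
more both factors are squares (when `i`, `j` are both odd this fails modulo 3), so `i² + j²` and
`9i² + j²` are both squares. If `3 ∣ j` then `(j / 3, i)` is a smaller solution of the same
pair of equations; otherwise `3 ∣ i`, and parametrising the two Pythagorean triples and applying
the four-number lemma to their common leg gives either a contradiction modulo 3 or 8, or again a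
smaller solution: an infinite descent.
-/

lemma sq_emod_three_cases (x : ℤ) : 3 ∣ x ∧ x ^ 2 % 3 = 0 ∨ ¬ 3 ∣ x ∧ x ^ 2 % 3 = 1 := by
  rcases (by omega : x % 3 = 0 ∨ x % 3 = 1 ∨ x % 3 = 2) with h | h | h <;>
    simp [pow_two, Int.mul_emod, h, Int.dvd_iff_emod_eq_zero]

lemma sq_emod_eight_cases (x : ℤ) :
    x % 2 = 1 ∧ x ^ 2 % 8 = 1 ∨ x % 4 = 0 ∧ x ^ 2 % 8 = 0 ∨ x % 4 = 2 ∧ x ^ 2 % 8 = 4 := by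
  have : x ^ 2 % 8 = (x % 8) * (x % 8) % 8 := by rw [pow_two, Int.mul_emod]
  rcases (by omega : x % 8 = 0 ∨ x % 8 = 1 ∨ x % 8 = 2 ∨ x % 8 = 3 ∨ x % 8 = 4 ∨ x % 8 = 5 ∨
    x % 8 = 6 ∨ x % 8 = 7) with h | h | h | h | h | h | h | h <;> simp only [h] at this <;> omega

lemma not_dvd_and_dvd_of_isCoprime {a b n : ℤ} (h : IsCoprime a b) (hn : 2 ≤ n) :
    ¬ (n ∣ a ∧ n ∣ b) := by
  rintro ⟨ha, hb⟩
  have := Int.isUnit_iff.1 (h.isUnit_of_dvd' ha hb)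
  omega

lemma isCoprime_of_odd_of_add_eq_two_pow {X Y a b : ℤ} {n : ℕ} (hX : Odd X)
    (h : a * X + b * Y = 2 ^ n) : IsCoprime X Y := by
  obtain ⟨k, hk⟩ := hX
  obtain ⟨u, v, huv⟩ : IsCoprime X (2 ^ n) := IsCoprime.pow_right ⟨1, -k, by linear_combination hk⟩
  exact ⟨u + v * a, v * b, by linear_combination huv + v * h⟩

lemma dvd_of_dvd_mul_of_dvd_mul_of_isCoprime {m n x y : ℤ} (hxy : IsCoprime x y)
    (hx : m ∣ n * x) (hy : m ∣ n * y) : m ∣ n := by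
  obtain ⟨u, v, huv⟩ := hxy
  rw [show n = u * (n * x) + v * (n * y) by linear_combination -n * huv]
  exact dvd_add (hx.mul_left u) (hy.mul_left v)

lemma eq_one_or_two_or_four_or_eight_of_dvd_eight {m : ℤ} (hm : 0 < m) (h : m ∣ 8) :
    m = 1 ∨ m = 2 ∨ m = 4 ∨ m = 8 := by
  have := Int.le_of_dvd (by norm_num) h
  interval_cases m <;> simp_all

lemma exists_pos_sq_of_isCoprime {a b c : ℤ} (hab : IsCoprime a b) (h : a * b = c ^ 2)
    (ha : 0 < a) : ∃ r, 0 < r ∧ a = r ^ 2 := by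
  obtain ⟨r, hr | hr⟩ := Int.sq_of_isCoprime hab h
  · exact ⟨|r|, abs_pos.2 (by rintro rfl; simp [hr] at ha), by rw [sq_abs, hr]⟩
  · nlinarith [sq_nonneg r]

lemma exists_eq_mul_sq_of_sq_mul_eq {a b A B : ℤ} (hab : IsCoprime a b) (ha : a ≠ 0)
    (hA : 0 < A) (h : a ^ 2 * B = b ^ 2 * A) : ∃ m, 0 < m ∧ A = m * a ^ 2 ∧ B = m * b ^ 2 := by
  obtain ⟨m, hm⟩ : a ^ 2 ∣ A :=
    (hab.pow (m := 2) (n := 2)).dvd_of_dvd_mul_left ⟨B, by linear_combination -h⟩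
  refine ⟨m, pos_of_mul_pos_right (hm ▸ hA) (sq_nonneg a), by linear_combination hm, ?_⟩
  exact mul_left_cancel₀ (pow_ne_zero 2 ha) (by linear_combination h + b ^ 2 * hm)

lemma exists_factors_of_mul_eq_mul {a b c d : ℤ} (ha : 0 < a) (hb : 0 < b) (hc : 0 < c)
    (h : a * b = c * d) : ∃ a₁ a₂ b₁ b₂ : ℤ, 0 < a₁ ∧ 0 < a₂ ∧ 0 < b₁ ∧ 0 < b₂ ∧
      a = a₁ * a₂ ∧ b = b₁ * b₂ ∧ c = a₁ * b₁ ∧ d = a₂ * b₂ := by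
  obtain ⟨a₁, b₁, ⟨a₂, rfl⟩, ⟨b₂, rfl⟩, rfl⟩ := exists_dvd_and_dvd_of_dvd_mul ⟨d, h⟩
  have hd : d = a₂ * b₂ := mul_left_cancel₀ hc.ne' (by linear_combination -h)
  have hd0 : 0 < d := pos_of_mul_pos_right (h ▸ mul_pos ha hb) hc.le
  subst hd
  refine ⟨|a₁|, |a₂|, |b₁|, |b₂|, abs_pos.2 (left_ne_zero_of_mul ha.ne'),
    abs_pos.2 (right_ne_zero_of_mul ha.ne'), abs_pos.2 (left_ne_zero_of_mul hb.ne'),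
    abs_pos.2 (right_ne_zero_of_mul hb.ne'), ?_, ?_, ?_, ?_⟩ <;>
    rw [← abs_mul, abs_of_pos ‹_›]

lemma exists_pythagorean_params {x y z : ℤ} (hy : 0 < y) (hz : 0 < z) (hx : x % 2 = 1)
    (hxy : IsCoprime x y) (h : x ^ 2 + y ^ 2 = z ^ 2) :
    ∃ a b : ℤ, 0 < a ∧ 0 < b ∧ IsCoprime a b ∧ a % 2 + b % 2 = 1 ∧
      x = a ^ 2 - b ^ 2 ∧ y = 2 * a * b ∧ z = a ^ 2 + b ^ 2 := by
  have ht : PythagoreanTriple x y z := by unfold PythagoreanTriple; linear_combination h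
  obtain ⟨a, b, rfl, rfl, rfl, hab, hpar, -⟩ :=
    ht.coprime_classification' (Int.isCoprime_iff_gcd_eq_one.1 hxy) hx hz
  have hab0 : 0 < a * b := by linarith
  refine ⟨|a|, |b|, abs_pos.2 (left_ne_zero_of_mul hab0.ne'),
    abs_pos.2 (right_ne_zero_of_mul hab0.ne'), ?_, ?_, by rw [sq_abs, sq_abs],
    by rw [mul_assoc, mul_assoc, ← abs_mul, abs_of_pos hab0], by rw [sq_abs, sq_abs]⟩
  · rw [IsCoprime.abs_left_iff, IsCoprime.abs_right_iff]
    exact Int.isCoprime_iff_gcd_eq_one.2 hab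
  · rcases abs_choice a with ha | ha <;> rcases abs_choice b with hb | hb <;> rw [ha, hb] <;> omega

lemma exists_three_mul_sq_add_sq_of_mul_eq_three_mul_sq {X Y s : ℤ} (hX : 0 < X) (hY : 0 < Y)
    (hXY : IsCoprime X Y) (h : X * Y = 3 * s ^ 2) :
    ∃ i j : ℤ, 0 < i ∧ 0 < j ∧ IsCoprime i j ∧ X + Y = 3 * i ^ 2 + j ^ 2 ∧
      i ^ 2 * j ^ 2 = s ^ 2 := by
  have hsplit : ∀ {X Y : ℤ}, 0 < X → 0 < Y → IsCoprime X Y → X * Y = 3 * s ^ 2 → 3 ∣ X →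
      ∃ i j : ℤ, 0 < i ∧ 0 < j ∧ IsCoprime i j ∧ X + Y = 3 * i ^ 2 + j ^ 2 ∧
        i ^ 2 * j ^ 2 = s ^ 2 := by
    rintro X Y hX hY hXY h ⟨γ, rfl⟩
    have hγY : γ * Y = s ^ 2 := mul_left_cancel₀ three_ne_zero (by linear_combination h)
    have hγ : IsCoprime γ Y := hXY.of_mul_left_right
    obtain ⟨i, hi, rfl⟩ := exists_pos_sq_of_isCoprime hγ hγY (by linarith)
    obtain ⟨j, hj, rfl⟩ :=
      exists_pos_sq_of_isCoprime hγ.symm (c := s) (by linear_combination hγY) hY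
    exact ⟨i, j, hi, hj, (IsCoprime.pow_iff two_pos two_pos).1 hγ, by ring, hγY⟩
  rcases Int.prime_three.dvd_or_dvd ⟨s ^ 2, h⟩ with h3 | h3
  · exact hsplit hX hY hXY h h3
  · obtain ⟨i, j, hi, hj, hij, hsum, hprod⟩ := hsplit hY hX hXY.symm (by linear_combination h) h3
    exact ⟨i, j, hi, hj, hij, by linear_combination hsum, hprod⟩

lemma three_dvd_and_three_dvd_of_dvd_sq_add_sq {x y : ℤ} (h : 3 ∣ x ^ 2 + y ^ 2) :
    3 ∣ x ∧ 3 ∣ y := by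
  have := sq_emod_three_cases x
  have := sq_emod_three_cases y
  omega

lemma odd_and_odd_of_sq_mul_three_sq_sub_sq {a₁ a₂ b₁ b₂ : ℤ} (ha₁ : 0 < a₁) (ha₂ : 0 < a₂)
    (h₁₂ : IsCoprime a₁ b₂) (h₂₁ : IsCoprime a₂ b₁) (haa : IsCoprime a₁ a₂)
    (h : a₁ ^ 2 * (3 * a₂ ^ 2 - b₁ ^ 2) = b₂ ^ 2 * (3 * b₁ ^ 2 - a₂ ^ 2)) :
    Odd (a₁ * a₂) ∧ Odd (b₁ * b₂) := by
  have hA : 0 < 3 * b₁ ^ 2 - a₂ ^ 2 := by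
    nlinarith [pow_pos ha₁ 2, pow_pos ha₂ 2, sq_nonneg b₂]
  obtain ⟨m, hm, hA, hB⟩ := exists_eq_mul_sq_of_sq_mul_eq h₁₂ ha₁.ne' hA h
  have h8 : m ∣ 8 := dvd_of_dvd_mul_of_dvd_mul_of_isCoprime (h₂₁.pow (m := 2) (n := 2))
    ⟨a₁ ^ 2 + 3 * b₂ ^ 2, by linear_combination hA + 3 * hB⟩
    ⟨3 * a₁ ^ 2 + b₂ ^ 2, by linear_combination 3 * hA + hB⟩
  have := not_dvd_and_dvd_of_isCoprime h₂₁ (n := 2) le_rfl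
  have := sq_emod_eight_cases a₂
  have := sq_emod_eight_cases b₁
  -- `m ≡ 1 (mod 3)` would give `3 ∣ a₁` and `3 ∣ a₂`, and `m = 8` fails modulo 8
  obtain rfl : m = 2 := by
    have h3 : ¬ 3 ∣ a₁ ^ 2 + a₂ ^ 2 := fun h3 =>
      not_dvd_and_dvd_of_isCoprime haa (by norm_num) (three_dvd_and_three_dvd_of_dvd_sq_add_sq h3)
    rcases eq_one_or_two_or_four_or_eight_of_dvd_eight hm h8 with rfl | rfl | rfl | rfl <;> omega
  have := sq_emod_eight_cases a₁
  have := sq_emod_eight_cases b₂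
  rw [Int.odd_mul, Int.odd_mul, Int.odd_iff, Int.odd_iff, Int.odd_iff, Int.odd_iff]
  omega

structure ConcordantNine (i j k l : ℤ) : Prop where
  i_pos : 0 < i
  j_pos : 0 < j
  k_pos : 0 < k
  l_pos : 0 < l
  isCoprime : IsCoprime i j
  sq_add_sq : i ^ 2 + j ^ 2 = k ^ 2
  nine_mul_sq_add_sq : 9 * i ^ 2 + j ^ 2 = l ^ 2

lemma concordantNine_of_sq_mul_nine_sq_sub_sq {a₁ a₂ b₁ b₂ : ℤ} (ha₁ : 0 < a₁) (ha₂ : 0 < a₂)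
    (hb₁ : 0 < b₁) (hb₂ : 0 < b₂) (h₁₂ : IsCoprime a₁ b₂) (h₂₁ : IsCoprime a₂ b₁)
    (h₂₂ : IsCoprime a₂ b₂) (h : a₁ ^ 2 * (9 * b₁ ^ 2 - a₂ ^ 2) = b₂ ^ 2 * (a₂ ^ 2 - b₁ ^ 2)) :
    ConcordantNine a₁ b₂ b₁ a₂ := by
  have hA : 0 < a₂ ^ 2 - b₁ ^ 2 := by
    nlinarith [pow_pos ha₁ 2, pow_pos hb₁ 2, sq_nonneg b₂]
  obtain ⟨m, hm, hA, hB⟩ := exists_eq_mul_sq_of_sq_mul_eq h₁₂ ha₁.ne' hA h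
  have h8 : m ∣ 8 := dvd_of_dvd_mul_of_dvd_mul_of_isCoprime (h₂₁.pow (m := 2) (n := 2))
    ⟨9 * a₁ ^ 2 + b₂ ^ 2, by linear_combination 9 * hA + hB⟩
    ⟨a₁ ^ 2 + b₂ ^ 2, by linear_combination hA + hB⟩
  -- `m ≡ 1 (mod 3)` would give `3 ∣ a₂` and `3 ∣ b₂`, and `m = 2` would make `a₁`, `b₂` even
  obtain rfl : m = 8 := by
    have h3 : ¬ 3 ∣ a₂ ^ 2 + b₂ ^ 2 := fun h3 =>
      not_dvd_and_dvd_of_isCoprime h₂₂ (by norm_num) (three_dvd_and_three_dvd_of_dvd_sq_add_sq h3)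
    have := not_dvd_and_dvd_of_isCoprime h₂₁ (n := 2) le_rfl
    have := not_dvd_and_dvd_of_isCoprime h₁₂ (n := 2) le_rfl
    have := sq_emod_eight_cases a₁
    have := sq_emod_eight_cases a₂
    have := sq_emod_eight_cases b₁
    have := sq_emod_eight_cases b₂
    rcases eq_one_or_two_or_four_or_eight_of_dvd_eight hm h8 with rfl | rfl | rfl | rfl <;> omega
  exact ⟨ha₁, hb₂, hb₁, ha₂, h₁₂, by linarith, by linarith⟩

namespace ConcordantNine

variable {i j k l : ℤ}

lemma three_dvd_or_three_dvd (h : ConcordantNine i j k l) : 3 ∣ i ∨ 3 ∣ j := by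
  have := sq_emod_three_cases i
  have := sq_emod_three_cases j
  have := sq_emod_three_cases k
  have := h.sq_add_sq
  omega

lemma emod_two_add_emod_two (h : ConcordantNine i j k l) : i % 2 + j % 2 = 1 := by
  have := not_dvd_and_dvd_of_isCoprime h.isCoprime (n := 2) le_rfl
  have := sq_emod_eight_cases i
  have := sq_emod_eight_cases j
  have := sq_emod_eight_cases k
  have := h.sq_add_sq
  omega

lemma exists_lt_of_three_dvd_right (h : ConcordantNine i j k l) (h3 : 3 ∣ j) :
    ∃ i' j' k' l', ConcordantNine i' j' k' l' ∧ k' < k := by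
  obtain ⟨j', rfl⟩ := h3
  obtain ⟨l', rfl⟩ : 3 ∣ l := Int.prime_three.dvd_of_dvd_pow (n := 2)
    ⟨3 * i ^ 2 + 3 * j' ^ 2, by linear_combination -h.nine_mul_sq_add_sq⟩
  have hj' : 0 < j' := by linarith [h.j_pos]
  refine ⟨j', i, l', k, ⟨hj', h.i_pos, by linarith [h.l_pos], h.k_pos,
    h.isCoprime.of_mul_right_right.symm, by linarith [h.nine_mul_sq_add_sq], by
    linarith [h.sq_add_sq]⟩, ?_⟩
  nlinarith [h.sq_add_sq, h.nine_mul_sq_add_sq, h.k_pos, h.l_pos]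

lemma false_of_three_dvd_of_odd (h : ConcordantNine i j k l) (h3 : 3 ∣ i) (hi : i % 2 = 1) :
    False := by
  have h3j : IsCoprime 3 j := (Prime.coprime_iff_not_dvd Int.prime_three).2 fun h3j =>
    not_dvd_and_dvd_of_isCoprime h.isCoprime (by norm_num) ⟨h3, h3j⟩
  obtain ⟨a, b, ha, hb, hab, hpar, hia, hja, -⟩ :=
    exists_pythagorean_params h.j_pos h.k_pos hi h.isCoprime h.sq_add_sq
  obtain ⟨c, d, hc, -, hcd, -, hic, hjc, -⟩ := exists_pythagorean_params h.j_pos h.l_pos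
    (by omega) (h3j.mul_left h.isCoprime) (by linear_combination h.nine_mul_sq_add_sq)
  have habcd : a * b = c * d := mul_left_cancel₀ two_ne_zero (by linear_combination hjc - hja)
  obtain ⟨a₁, a₂, b₁, b₂, ha₁, ha₂, -, -, rfl, rfl, rfl, rfl⟩ :=
    exists_factors_of_mul_eq_mul ha hb hc habcd
  have := odd_and_odd_of_sq_mul_three_sq_sub_sq ha₁ ha₂
    hab.of_mul_left_left.of_mul_right_right hab.of_mul_left_right.of_mul_right_left
    hcd.of_mul_left_left.of_mul_right_left (by linear_combination hic - 3 * hia)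
  simp only [Int.odd_iff] at this
  omega

lemma exists_lt_of_three_dvd_of_odd (h : ConcordantNine i j k l) (h3 : 3 ∣ i) (hj : j % 2 = 1) :
    ∃ i' j' k' l', ConcordantNine i' j' k' l' ∧ k' < k := by
  have h3j : IsCoprime j 3 := ((Prime.coprime_iff_not_dvd Int.prime_three).2 fun h3j =>
    not_dvd_and_dvd_of_isCoprime h.isCoprime (by norm_num) ⟨h3, h3j⟩).symm
  obtain ⟨a, b, ha, hb, hab, -, hja, hia, hka⟩ := exists_pythagorean_params h.i_pos h.k_pos hj
    h.isCoprime.symm (by linear_combination h.sq_add_sq)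
  obtain ⟨c, d, hc, -, hcd, -, hjc, hic, -⟩ := exists_pythagorean_params (by linarith [h.i_pos])
    h.l_pos hj (h3j.mul_right h.isCoprime.symm) (by linear_combination h.nine_mul_sq_add_sq)
  have hcd3 : c * d = 3 * (a * b) :=
    mul_left_cancel₀ two_ne_zero (by linear_combination 3 * hia - hic)
  rcases Int.prime_three.dvd_or_dvd ⟨a * b, hcd3⟩ with ⟨c, rfl⟩ | ⟨d, rfl⟩
  · have habcd : a * b = c * d := mul_left_cancel₀ three_ne_zero (by linear_combination -hcd3)
    obtain ⟨a₁, a₂, b₁, b₂, ha₁, ha₂, hb₁, hb₂, rfl, rfl, rfl, rfl⟩ :=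
      exists_factors_of_mul_eq_mul ha hb (by linarith) habcd
    refine ⟨a₁, b₂, b₁, a₂, concordantNine_of_sq_mul_nine_sq_sub_sq ha₁ ha₂ hb₁ hb₂
      hab.of_mul_left_left.of_mul_right_right hab.of_mul_left_right.of_mul_right_left
      hab.of_mul_left_right.of_mul_right_right (by linear_combination hja - hjc), ?_⟩
    nlinarith [mul_pos ha₁ ha₂, mul_pos hb₁ hb₂]
  · have habcd : a * b = c * d := mul_left_cancel₀ three_ne_zero (by linear_combination -hcd3)
    obtain ⟨a₁, a₂, b₁, b₂, ha₁, ha₂, hb₁, hb₂, rfl, rfl, rfl, rfl⟩ :=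
      exists_factors_of_mul_eq_mul ha hb hc habcd
    refine ⟨b₂, a₁, a₂, b₁, concordantNine_of_sq_mul_nine_sq_sub_sq hb₂ hb₁ ha₂ ha₁
      hab.symm.of_mul_left_right.of_mul_right_left hab.symm.of_mul_left_left.of_mul_right_right
      hab.symm.of_mul_left_left.of_mul_right_left (by linear_combination hjc - hja), ?_⟩
    nlinarith [mul_pos ha₁ ha₂, mul_pos hb₁ hb₂]

lemma exists_lt (h : ConcordantNine i j k l) :
    ∃ i' j' k' l', ConcordantNine i' j' k' l' ∧ k' < k := by
  rcases h.three_dvd_or_three_dvd with h3 | h3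
  · rcases (by have := h.emod_two_add_emod_two; omega : i % 2 = 1 ∨ j % 2 = 1) with hi | hj
    · exact (h.false_of_three_dvd_of_odd h3 hi).elim
    · exact h.exists_lt_of_three_dvd_of_odd h3 hj
  · exact h.exists_lt_of_three_dvd_right h3

end ConcordantNine

theorem not_concordantNine {i j k l : ℤ} : ¬ ConcordantNine i j k l := by
  intro h
  induction hn : k.toNat using Nat.strong_induction_on generalizing i j k l with
  | _ n ih =>
    obtain ⟨i', j', k', l', h', hk'⟩ := h.exists_lt
    exact ih k'.toNat (by have := h'.k_pos; omega) h' rfl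

lemma nine_mul_sq_add_sq_mul_sq_add_sq_ne_sq {i j V : ℤ} (hi : 0 < i) (hj : 0 < j)
    (hij : IsCoprime i j) : (9 * i ^ 2 + j ^ 2) * (i ^ 2 + j ^ 2) ≠ V ^ 2 := by
  intro h
  obtain ⟨x, y, hxy⟩ := hij.pow (m := 2) (n := 2)
  have := not_dvd_and_dvd_of_isCoprime hij (n := 2) le_rfl
  have := sq_emod_eight_cases i
  have := sq_emod_eight_cases j
  have hY : 0 < i ^ 2 + j ^ 2 := by positivity
  have hX : 0 < 9 * i ^ 2 + j ^ 2 := by positivity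
  rcases (by omega : i % 2 + j % 2 = 1 ∨ i % 2 = 1 ∧ j % 2 = 1) with hpar | ⟨hi2, hj2⟩
  · have hcop : IsCoprime (i ^ 2 + j ^ 2) (9 * i ^ 2 + j ^ 2) :=
      isCoprime_of_odd_of_add_eq_two_pow (Int.odd_iff.2 (by omega)) (a := 9 * y - x) (b := x - y)
        (n := 3) (by linear_combination 8 * hxy)
    obtain ⟨k, hk, hk2⟩ := exists_pos_sq_of_isCoprime hcop (c := V) (by linear_combination h) hY
    obtain ⟨l, hl, hl2⟩ := exists_pos_sq_of_isCoprime hcop.symm h hX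
    exact not_concordantNine ⟨hi, hj, hk, hl, hij, hk2, hl2⟩
  · obtain ⟨A, hA⟩ : ∃ A, 9 * i ^ 2 + j ^ 2 = 2 * A := ⟨(9 * i ^ 2 + j ^ 2) / 2, by omega⟩
    obtain ⟨B, hB⟩ : ∃ B, i ^ 2 + j ^ 2 = 2 * B := ⟨(i ^ 2 + j ^ 2) / 2, by omega⟩
    have hcop : IsCoprime B A :=
      isCoprime_of_odd_of_add_eq_two_pow (Int.odd_iff.2 (by omega)) (a := 9 * y - x) (b := x - y)
        (n := 2) (mul_left_cancel₀ two_ne_zero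
          (by linear_combination 8 * hxy - (9 * y - x) * hB - (x - y) * hA))
    obtain ⟨W, rfl⟩ : 2 ∣ V := Int.prime_two.dvd_of_dvd_pow (n := 2)
      ⟨2 * A * B, by linear_combination -h + (9 * i ^ 2 + j ^ 2) * hB + 2 * B * hA⟩
    have hBA : B * A = W ^ 2 := mul_left_cancel₀ four_ne_zero
      (by linear_combination h - (9 * i ^ 2 + j ^ 2) * hB - 2 * B * hA)
    obtain ⟨b, -, rfl⟩ := exists_pos_sq_of_isCoprime hcop hBA (by omega)
    obtain ⟨a, -, rfl⟩ :=
      exists_pos_sq_of_isCoprime hcop.symm (c := W) (by linear_combination hBA) (by omega)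
    -- modulo 3, `9i² + j² = 2a²` forces `3 ∣ j`, and then `i² + j² = 2b²` forces `3 ∣ i`
    have := sq_emod_three_cases i
    have := sq_emod_three_cases j
    have := sq_emod_three_cases a
    have := sq_emod_three_cases b
    have := not_dvd_and_dvd_of_isCoprime hij (n := 3) (by norm_num)
    omega

lemma isCoprime_of_sq_add_three_mul_sq_eq_sq {p q u : ℤ} (hpq : IsCoprime p q)
    (h : u ^ 2 + 3 * p ^ 2 = q ^ 2) : IsCoprime q u := by
  refine isCoprime_of_prime_dvd ?_ fun π hπ hπq hπu => ?_
  · rintro ⟨rfl, rfl⟩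
    obtain rfl : p = 0 := by nlinarith
    exact not_isCoprime_zero_zero hpq
  have hπp : IsCoprime π p := (Prime.coprime_iff_not_dvd hπ).2 fun hπp =>
    hπ.not_isUnit (hpq.isUnit_of_dvd' hπp hπq)
  have h3p : π ^ 2 ∣ 3 * p ^ 2 := by
    rw [show 3 * p ^ 2 = q ^ 2 - u ^ 2 by linear_combination h]
    exact dvd_sub (pow_dvd_pow_of_dvd hπq 2) (pow_dvd_pow_of_dvd hπu 2)
  exact hπ.not_isUnit (Int.prime_three.squarefree π
    (sq π ▸ (hπp.pow (m := 2) (n := 2)).dvd_of_dvd_mul_right h3p))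

lemma exists_nine_mul_sq_add_sq_mul_sq_add_sq_eq_sq {p q u v : ℤ} (hp : 0 < p) (hq : 0 < q)
    (hu : 0 < u) (hpq : IsCoprime p q) (hpar : p % 2 + q % 2 = 1)
    (hu2 : q ^ 2 - 3 * p ^ 2 = u ^ 2) (hv2 : q ^ 2 + p ^ 2 = v ^ 2) :
    ∃ i j V : ℤ, 0 < i ∧ 0 < j ∧ IsCoprime i j ∧
      (9 * i ^ 2 + j ^ 2) * (i ^ 2 + j ^ 2) = V ^ 2 := by
  obtain ⟨x, y, hxy⟩ :=
    isCoprime_of_sq_add_three_mul_sq_eq_sq hpq (u := u) (by linear_combination -hu2)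
  have huq : u < q := by nlinarith [mul_pos hp hp]
  have := sq_emod_eight_cases p
  have := sq_emod_eight_cases q
  have := sq_emod_eight_cases u
  rcases (by omega : q % 2 = 0 ∨ q % 2 = 1) with hq2 | hq2
  · have hcop : IsCoprime (q - u) (q + u) :=
      isCoprime_of_odd_of_add_eq_two_pow (Int.odd_iff.2 (by omega)) (a := x - y) (b := x + y)
        (n := 1) (by linear_combination 2 * hxy)
    obtain ⟨i, j, hi, hj, hij, hsum, hprod⟩ :=
      exists_three_mul_sq_add_sq_of_mul_eq_three_mul_sq (by linarith) (by linarith) hcop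
        (s := p) (by linear_combination hu2)
    exact ⟨i, j, 2 * v, hi, hj, hij, by
      linear_combination (-(3 * i ^ 2 + j ^ 2 + 2 * q)) * hsum + 4 * hprod + 4 * hv2⟩
  · obtain ⟨w, rfl⟩ : 2 ∣ p := ⟨p / 2, by omega⟩
    obtain ⟨α, β, rfl, rfl⟩ : ∃ α β, q = α + β ∧ u = β - α :=
      ⟨(q - u) / 2, (q + u) / 2, by omega, by omega⟩
    have hcop : IsCoprime α β := ⟨x - y, x + y, by linear_combination hxy⟩
    obtain ⟨i, j, hi, hj, hij, hsum, hprod⟩ :=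
      exists_three_mul_sq_add_sq_of_mul_eq_three_mul_sq (by linarith) (by linarith) hcop
        (s := w) (mul_left_cancel₀ four_ne_zero (by linear_combination hu2))
    exact ⟨i, j, v, hi, hj, hij, by
      linear_combination (-(3 * i ^ 2 + j ^ 2 + α + β)) * hsum + 4 * hprod + hv2⟩

theorem not_isSquare_sq_sub_three_mul_sq_mul_sq_add_sq {p q : ℤ} (hp : 0 < p) (hq : 0 < q)
    (hpq : IsCoprime p q) : ¬ IsSquare ((q ^ 2 - 3 * p ^ 2) * (q ^ 2 + p ^ 2)) := by
  rintro ⟨r, h⟩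
  obtain ⟨x, y, hxy⟩ := hpq.pow (m := 2) (n := 2)
  have := not_dvd_and_dvd_of_isCoprime hpq (n := 2) le_rfl
  have := sq_emod_eight_cases p
  have := sq_emod_eight_cases q
  have hY : 0 < q ^ 2 + p ^ 2 := by positivity
  rcases (by omega : p % 2 + q % 2 = 1 ∨ p % 2 = 1 ∧ q % 2 = 1) with hpar | ⟨hp2, hq2⟩
  · have hcop : IsCoprime (q ^ 2 + p ^ 2) (q ^ 2 - 3 * p ^ 2) :=
      isCoprime_of_odd_of_add_eq_two_pow (Int.odd_iff.2 (by omega)) (a := x + 3 * y) (b := y - x)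
        (n := 2) (by linear_combination 4 * hxy)
    have hX : 0 < q ^ 2 - 3 * p ^ 2 := by
      have : 0 ≤ q ^ 2 - 3 * p ^ 2 := nonneg_of_mul_nonneg_left (h ▸ mul_self_nonneg r) hY
      omega
    obtain ⟨v, -, hv⟩ := exists_pos_sq_of_isCoprime hcop (c := r) (by linear_combination h) hY
    obtain ⟨u, hu, hu'⟩ :=
      exists_pos_sq_of_isCoprime hcop.symm (c := r) (by linear_combination h) hX
    obtain ⟨i, j, V, hi, hj, hij, hV⟩ :=
      exists_nine_mul_sq_add_sq_mul_sq_add_sq_eq_sq hp hq hu hpq hpar hu' hv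
    exact nine_mul_sq_add_sq_mul_sq_add_sq_ne_sq hi hj hij hV
  · obtain ⟨A, hA⟩ : ∃ A, q ^ 2 - 3 * p ^ 2 = 2 * A := ⟨(q ^ 2 - 3 * p ^ 2) / 2, by omega⟩
    obtain ⟨B, hB⟩ : ∃ B, q ^ 2 + p ^ 2 = 2 * B := ⟨(q ^ 2 + p ^ 2) / 2, by omega⟩
    have hcop : IsCoprime B A :=
      isCoprime_of_odd_of_add_eq_two_pow (Int.odd_iff.2 (by omega)) (a := x + 3 * y) (b := y - x)
        (n := 1) (mul_left_cancel₀ two_ne_zero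
          (by linear_combination 4 * hxy - (x + 3 * y) * hB - (y - x) * hA))
    obtain ⟨s, rfl⟩ : 2 ∣ r := Int.prime_two.dvd_of_dvd_pow (n := 2)
      ⟨2 * A * B, by linear_combination -h + (q ^ 2 - 3 * p ^ 2) * hB + 2 * B * hA⟩
    have hBA : B * A = s ^ 2 := mul_left_cancel₀ four_ne_zero
      (by linear_combination h - (q ^ 2 - 3 * p ^ 2) * hB - 2 * B * hA)
    have hA0 : 0 < A := by
      have : 0 ≤ A := nonneg_of_mul_nonneg_right (hBA ▸ sq_nonneg s) (by omega)
      omega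
    obtain ⟨a, -, rfl⟩ := exists_pos_sq_of_isCoprime hcop.symm (c := s)
      (by linear_combination hBA) hA0
    -- `q² - 3p² ≡ 6 (mod 8)`, so `A ≡ 3 (mod 4)` is not a square
    have := sq_emod_eight_cases a
    omega

lemma isSquare_num_den_of_isSquare {t : ℚ} (h : IsSquare ((1 - 3 * t ^ 2) * (1 + t ^ 2))) :
    IsSquare (((t.den : ℤ) ^ 2 - 3 * t.num ^ 2) * ((t.den : ℤ) ^ 2 + t.num ^ 2)) := by
  have ht : t * t.den = t.num := Rat.mul_den_eq_num t
  rw [← Rat.isSquare_intCast_iff]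
  have e : (((t.den ^ 2 - 3 * t.num ^ 2) * (t.den ^ 2 + t.num ^ 2) : ℤ) : ℚ) =
      ((t.den : ℚ) ^ 2) ^ 2 * ((1 - 3 * t ^ 2) * (1 + t ^ 2)) := by
    push_cast
    linear_combination ((t.num : ℚ) + t * t.den) *
      (2 * (t.den : ℚ) ^ 2 + 3 * ((t.num : ℚ) ^ 2 + (t * t.den) ^ 2)) * ht
  exact e ▸ (IsSquare.sq _).mul h

/-- there are no equilateral hyperbolic Heron triangles, in the
algebraic form: there are no rationals `c = cos α`, `s = sin α`, `d` with
`c² + s² = 1`, `1/2 < c < 1`, `s > 0`, `d > 0` and `d² = (2c−1)(c+1)²`. -/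
theorem no_equilateral_heron :
    ¬ ∃ c s d : ℚ, c ^ 2 + s ^ 2 = 1 ∧ 1 / 2 < c ∧ c < 1 ∧ 0 < s ∧ 0 < d ∧
      d ^ 2 = (2 * c - 1) * (c + 1) ^ 2 := by
  rintro ⟨c, s, d, hcs, hc, -, hs, -, hd⟩
  have hc1 : 0 < c + 1 := by linarith
  have hsq : IsSquare ((1 - 3 * (s / (c + 1)) ^ 2) * (1 + (s / (c + 1)) ^ 2)) :=
    ⟨2 * d / (c + 1) ^ 2, by
      field_simp
      linear_combination (-4) * hd + (c ^ 2 - 4 * c - 5 - 3 * s ^ 2) * hcs⟩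
  exact not_isSquare_sq_sub_three_mul_sq_mul_sq_add_sq (Rat.num_pos.2 (div_pos hs hc1))
    (mod_cast Rat.pos _) (Rat.isCoprime_num_den _) (isSquare_num_den_of_isSquare hsq)
end

section
/- The only rational point on the elliptic curve y² = x³ + x² + x is (0,0): for all rational numbers x, y, if y² = x³ + x² + x then x = 0 and y = 0. -/
/-!
Writing `x = n / d` in lowest terms, `(y d²)² = n d (n² + n d + d²)` with pairwise coprime
factors, so `n = r²`, `d = f²` and `r⁴ + r² f² + f⁴ = s²`. Since
`s² + (r f)² = (r² + f²)²`, the Pythagorean parametrisation turns such a solution into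
coprime `x, y` and `m n ≠ 0` with `x² + y² = m² + n²` and `x y = 2 m n`. Such a quadruple
descends to a smaller one: with `x` odd and `y = 2 w`, write `x = A B`, `w = C D`,
`m = A C`, `n = B D`; then `A² (B² - C²) = D² (B² - 4 C²)` forces `B² - C² = k D²` and
`B² - 4 C² = k A²` with `k ∣ 3` and `k ≡ 1 [ZMOD 4]`, i.e. `k = 1` or `k = -3`. Either way
one gets two Pythagorean triples `X² + (2 Y)² = H² = Z² + Y²` with `H ≤ x`, and
parametrising the first one yields a solution of the quartic, hence a quadruple, of size `H`.
-/

theorem Int.odd_or_odd_of_isCoprime {a b : ℤ} (h : IsCoprime a b) : Odd a ∨ Odd b := by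
  rcases Int.even_or_odd a with ha | ha
  · rcases Int.even_or_odd b with hb | hb
    · exact absurd (h.isUnit_of_dvd' ha.two_dvd hb.two_dvd) Int.prime_two.not_isUnit
    · exact .inr hb
  · exact .inl ha

theorem Int.exists_eq_sq_of_isCoprime_of_pos {a b c : ℤ} (hab : IsCoprime a b)
    (h : a * b = c ^ 2) (ha : 0 < a) : ∃ r, a = r ^ 2 := by
  obtain ⟨r, hr | hr⟩ := Int.sq_of_isCoprime hab h
  · exact ⟨r, hr⟩
  · nlinarith [sq_nonneg r]

theorem Int.exists_four_factors {x w m n : ℤ} (hx : 0 < x) (hw : 0 < w) (hm : 0 < m)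
    (h : x * w = m * n) :
    ∃ A B C D : ℤ, 0 < A ∧ 0 < B ∧ 0 < C ∧ 0 < D ∧
      x = A * B ∧ w = C * D ∧ m = A * C ∧ n = B * D := by
  obtain ⟨A, C, ⟨B, rfl⟩, ⟨D, rfl⟩, rfl⟩ := exists_dvd_and_dvd_of_dvd_mul (Dvd.intro n h.symm)
  obtain rfl : n = B * D := mul_left_cancel₀ hm.ne' (by linear_combination -h)
  have hBD : 0 < B * D := (pos_iff_pos_of_mul_pos (h ▸ mul_pos hx hw)).1 hm
  obtain ⟨⟨hA, hB⟩, hC, hD⟩ : (A ≠ 0 ∧ B ≠ 0) ∧ C ≠ 0 ∧ D ≠ 0 := by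
    simpa only [mul_ne_zero_iff] using (mul_pos hx hw).ne'
  refine ⟨|A|, |B|, |C|, |D|, abs_pos.2 hA, abs_pos.2 hB, abs_pos.2 hC, abs_pos.2 hD,
    ?_, ?_, ?_, ?_⟩ <;> rw [← abs_mul, abs_of_pos] <;> assumption

theorem exists_pythagorean_parametrization {a b c : ℤ} (hab : IsCoprime a b) (ha : Odd a)
    (hc : 0 < c) (h : a ^ 2 + b ^ 2 = c ^ 2) :
    ∃ m n, IsCoprime m n ∧ a = m ^ 2 - n ^ 2 ∧ b = 2 * m * n ∧ c = m ^ 2 + n ^ 2 := by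
  have htriple : PythagoreanTriple a b c := by
    unfold PythagoreanTriple
    linear_combination h
  obtain ⟨m, n, rfl, rfl, rfl, hmn, -⟩ := htriple.coprime_classification'
    (Int.isCoprime_iff_gcd_eq_one.mp hab) (Int.odd_iff.mp ha) hc
  exact ⟨m, n, Int.isCoprime_iff_gcd_eq_one.mpr hmn, rfl, rfl, rfl⟩

theorem quartic_ne_sq_of_odd_of_odd {p q : ℤ} (hp : Odd p) (hq : Odd q) (s : ℤ) :
    p ^ 4 + p ^ 2 * q ^ 2 + q ^ 4 ≠ s ^ 2 := by
  obtain ⟨a, rfl⟩ := hp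
  obtain ⟨b, rfl⟩ := hq
  obtain ⟨c, rfl | rfl⟩ := Int.even_or_odd' s
  all_goals
    intro h
    ring_nf at h
    omega

theorem eq_one_or_eq_neg_three {A B C D k : ℤ} (hA : Odd A) (hB : Odd B) (hBC : IsCoprime B C)
    (h₁ : B ^ 2 - C ^ 2 = D ^ 2 * k) (h₂ : B ^ 2 - 4 * C ^ 2 = A ^ 2 * k) : k = 1 ∨ k = -3 := by
  obtain ⟨u, v, huv⟩ := hBC.pow (m := 2) (n := 2)
  have hk3 : k ∣ 3 := ⟨u * (4 * D ^ 2 - A ^ 2) + v * (D ^ 2 - A ^ 2),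
    by linear_combination (-3) * huv + u * (4 * h₁ - h₂) + v * (h₁ - h₂)⟩
  obtain ⟨t, ht⟩ : ∃ t, k = 4 * t + 1 := by
    obtain ⟨a, rfl⟩ := hA
    obtain ⟨b, rfl⟩ := hB
    exact ⟨b ^ 2 + b - C ^ 2 - k * (a ^ 2 + a), by linear_combination -h₂⟩
  have := Nat.prime_three.eq_one_or_self_of_dvd _ (Int.natAbs_dvd_natAbs.2 hk3)
  omega

structure IsNontrivialQuad (x y m n : ℤ) : Prop where
  isCoprime : IsCoprime x y
  sq_add_sq : x ^ 2 + y ^ 2 = m ^ 2 + n ^ 2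
  mul_eq : x * y = 2 * (m * n)
  ne_zero : m * n ≠ 0

namespace IsNontrivialQuad

variable {x y m n : ℤ}

theorem swap (h : IsNontrivialQuad x y m n) : IsNontrivialQuad y x m n :=
  ⟨h.isCoprime.symm, by linear_combination h.sq_add_sq, by linear_combination h.mul_eq,
    h.ne_zero⟩

theorem abs (h : IsNontrivialQuad x y m n) : IsNontrivialQuad |x| |y| |m| |n| where
  isCoprime := h.isCoprime.abs_abs
  sq_add_sq := by simpa only [sq_abs] using h.sq_add_sq
  mul_eq := by rw [← abs_mul, ← abs_mul, h.mul_eq, abs_mul, abs_two]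
  ne_zero := by rw [← abs_mul]; exact abs_ne_zero.2 h.ne_zero

end IsNontrivialQuad

theorem exists_isNontrivialQuad_of_quartic {p q s : ℤ} (hpq : IsCoprime p q) (hpq₀ : p * q ≠ 0)
    (h : p ^ 4 + p ^ 2 * q ^ 2 + q ^ 4 = s ^ 2) : ∃ m n, IsNontrivialQuad p q m n := by
  have hs : Odd s := by
    have h₁ := Int.odd_or_odd_of_isCoprime hpq
    have h₂ : ¬(Odd p ∧ Odd q) := fun ⟨hp, hq⟩ => quartic_ne_sq_of_odd_of_odd hp hq s h
    rw [← Int.odd_pow' two_ne_zero, ← h]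
    simp only [← Int.not_even_iff_odd, Int.even_add, Int.even_mul, Int.even_pow] at *
    tauto
  have hcop : IsCoprime s (p * q) := by
    refine .symm (.mul_left ?_ ?_) <;> rw [← IsCoprime.pow_right_iff two_pos, ← h]
    · rw [show p ^ 4 + p ^ 2 * q ^ 2 + q ^ 4 = q ^ 4 + p * (p ^ 3 + p * q ^ 2) by ring]
      exact (hpq.pow_right (n := 4)).add_mul_left_right _
    · rw [show p ^ 4 + p ^ 2 * q ^ 2 + q ^ 4 = p ^ 4 + q * (q ^ 3 + q * p ^ 2) by ring]
      exact (hpq.symm.pow_right (n := 4)).add_mul_left_right _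
  have hsum : 0 < p ^ 2 + q ^ 2 := by
    have := left_ne_zero_of_mul hpq₀
    positivity
  obtain ⟨m, n, -, -, hmn, hpq'⟩ := exists_pythagorean_parametrization hcop hs hsum
    (by linear_combination -h)
  exact ⟨m, n, hpq, hpq', by linear_combination hmn,
    fun h0 => hpq₀ (by linear_combination hmn + 2 * h0)⟩

theorem exists_isNontrivialQuad_of_sq_add_sq {X Y Z H : ℤ} (hX : Odd X) (hH : 0 < H)
    (hY : Y ≠ 0) (hXY : IsCoprime X Y) (h₁ : X ^ 2 + (2 * Y) ^ 2 = H ^ 2)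
    (h₂ : Z ^ 2 + Y ^ 2 = H ^ 2) :
    ∃ x y m n, IsNontrivialQuad x y m n ∧ x ^ 2 + y ^ 2 = H := by
  obtain ⟨c, d, hcd, -, hYcd, rfl⟩ :=
    exists_pythagorean_parametrization ((Int.isCoprime_two_right.2 hX).mul_right hXY) hX hH h₁
  replace hYcd : Y = c * d := by linarith
  obtain ⟨m, n, hq⟩ := exists_isNontrivialQuad_of_quartic (s := Z) hcd (hYcd ▸ hY)
    (by linear_combination -h₂ + (Y + c * d) * hYcd)
  exact ⟨c, d, m, n, hq, rfl⟩

namespace IsNontrivialQuad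

variable {x y m n : ℤ}

theorem exists_lt_of_pos_of_odd (h : IsNontrivialQuad x y m n) (hx : 0 < x) (hy : 0 < y)
    (hm : 0 < m) (hodd : Odd x) :
    ∃ x' y' m' n', IsNontrivialQuad x' y' m' n' ∧ x' ^ 2 + y' ^ 2 < x ^ 2 + y ^ 2 := by
  obtain ⟨w, rfl⟩ : Even y := by
    refine (Int.even_mul.1 ?_).resolve_left (Int.not_even_iff_odd.2 hodd)
    rw [h.mul_eq]
    exact even_two_mul _
  obtain ⟨A, B, C, D, hA, hB, hC, hD, rfl, rfl, rfl, rfl⟩ :=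
    Int.exists_four_factors (w := w) (n := n) hx (by linarith) hm
      (mul_left_cancel₀ two_ne_zero (by linear_combination h.mul_eq))
  have hcop : IsCoprime (A * B) (C * D) :=
    h.isCoprime.of_isCoprime_of_dvd_right (Dvd.intro_left 2 (two_mul _))
  obtain ⟨hAodd, hBodd⟩ := Int.odd_mul.1 hodd
  obtain ⟨k, hk⟩ : D ^ 2 ∣ B ^ 2 - C ^ 2 :=
    (hcop.of_mul_left_left.of_mul_right_right.symm.pow (m := 2) (n := 2)).dvd_of_dvd_mul_left
      ⟨B ^ 2 - 4 * C ^ 2, by linear_combination h.sq_add_sq⟩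
  have hk' : B ^ 2 - 4 * C ^ 2 = A ^ 2 * k := mul_left_cancel₀ (pow_ne_zero 2 hD.ne')
    (by linear_combination -h.sq_add_sq + A ^ 2 * hk)
  have hAB : A * B < (A * B) ^ 2 + (C * D + C * D) ^ 2 := by nlinarith
  rcases eq_one_or_eq_neg_three hAodd hBodd hcop.of_mul_left_right.of_mul_right_left hk hk'
    with rfl | rfl
  · obtain ⟨x', y', m', n', hq, hsize⟩ := exists_isNontrivialQuad_of_sq_add_sq (Z := D) hAodd
      hB hC.ne' hcop.of_mul_left_left.of_mul_right_left (by linear_combination -hk')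
      (by linear_combination -hk)
    exact ⟨x', y', m', n', hq, by nlinarith⟩
  · obtain ⟨x', y', m', n', hq, hsize⟩ := exists_isNontrivialQuad_of_sq_add_sq (Z := C) hBodd
      hA hD.ne' hcop.of_mul_left_right.of_mul_right_right (by linarith) (by linarith)
    exact ⟨x', y', m', n', hq, by nlinarith⟩

theorem exists_lt (h : IsNontrivialQuad x y m n) :
    ∃ x' y' m' n', IsNontrivialQuad x' y' m' n' ∧ x' ^ 2 + y' ^ 2 < x ^ 2 + y ^ 2 := by
  have hxy : x * y ≠ 0 := by
    rw [h.mul_eq]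
    exact mul_ne_zero two_ne_zero h.ne_zero
  have hx : 0 < |x| := abs_pos.2 (left_ne_zero_of_mul hxy)
  have hy : 0 < |y| := abs_pos.2 (right_ne_zero_of_mul hxy)
  have hm : 0 < |m| := abs_pos.2 (left_ne_zero_of_mul h.ne_zero)
  rw [← sq_abs x, ← sq_abs y]
  rcases Int.odd_or_odd_of_isCoprime h.abs.isCoprime with hodd | hodd
  · exact h.abs.exists_lt_of_pos_of_odd hx hy hm hodd
  · rw [add_comm]
    exact h.abs.swap.exists_lt_of_pos_of_odd hy hx hm hodd

end IsNontrivialQuad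

theorem not_isNontrivialQuad (x y m n : ℤ) : ¬IsNontrivialQuad x y m n := by
  induction hN : (x ^ 2 + y ^ 2).toNat using Nat.strong_induction_on generalizing x y m n with
  | _ N ih =>
    intro h
    obtain ⟨x', y', m', n', h', hlt⟩ := h.exists_lt
    have : 0 ≤ x' ^ 2 + y' ^ 2 := by positivity
    exact ih _ (by omega) x' y' m' n' rfl h'

theorem mul_eq_zero_of_quartic_eq_sq {p q s : ℤ} (hpq : IsCoprime p q)
    (h : p ^ 4 + p ^ 2 * q ^ 2 + q ^ 4 = s ^ 2) : p * q = 0 := by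
  by_contra hpq₀
  obtain ⟨m, n, hq⟩ := exists_isNontrivialQuad_of_quartic hpq hpq₀ h
  exact not_isNontrivialQuad p q m n hq

theorem exists_quartic_of_mul_eq_sq {n d z : ℤ} (hn : 0 < n) (hd : 0 < d) (hnd : IsCoprime n d)
    (h : n * d * (n ^ 2 + n * d + d ^ 2) = z ^ 2) :
    ∃ r f s, IsCoprime r f ∧ n = r ^ 2 ∧ d = f ^ 2 ∧ r ^ 4 + r ^ 2 * f ^ 2 + f ^ 4 = s ^ 2 := by
  have hQ : 0 < n ^ 2 + n * d + d ^ 2 := by positivity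
  have hnQ : IsCoprime n (n ^ 2 + n * d + d ^ 2) := by
    rw [show n ^ 2 + n * d + d ^ 2 = d ^ 2 + n * (n + d) by ring]
    exact hnd.pow_right.add_mul_left_right _
  have hdQ : IsCoprime d (n ^ 2 + n * d + d ^ 2) := by
    rw [show n ^ 2 + n * d + d ^ 2 = n ^ 2 + d * (n + d) by ring]
    exact hnd.symm.pow_right.add_mul_left_right _
  have hnQd : IsCoprime (n * (n ^ 2 + n * d + d ^ 2)) d := hnd.mul_left hdQ.symm
  obtain ⟨f, rfl⟩ := Int.exists_eq_sq_of_isCoprime_of_pos (c := z) hnQd.symm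
    (by linear_combination h) hd
  obtain ⟨g, hg⟩ := Int.exists_eq_sq_of_isCoprime_of_pos (c := z) hnQd (by linear_combination h)
    (mul_pos hn hQ)
  obtain ⟨r, rfl⟩ := Int.exists_eq_sq_of_isCoprime_of_pos hnQ hg hn
  obtain ⟨s, hs⟩ := Int.exists_eq_sq_of_isCoprime_of_pos (c := g) hnQ.symm
    (by linear_combination hg) hQ
  exact ⟨r, f, s, (IsCoprime.pow_iff two_pos two_pos).1 hnd, rfl, rfl, by linear_combination hs⟩

theorem exists_quartic_of_rational_point {x y : ℚ} (h : y ^ 2 = x ^ 3 + x ^ 2 + x)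
    (hx : x ≠ 0) :
    ∃ r f s : ℤ, IsCoprime r f ∧ r * f ≠ 0 ∧ r ^ 4 + r ^ 2 * f ^ 2 + f ^ 4 = s ^ 2 := by
  have hxpos : 0 < x := by
    refine hx.symm.lt_of_le (not_lt.1 fun hneg => ?_)
    have : 0 < x ^ 2 + x + 1 := by nlinarith [sq_nonneg (x + 1 / 2)]
    nlinarith [mul_pos (neg_pos.2 hneg) this, sq_nonneg y]
  obtain ⟨z, hz⟩ : IsSquare (x.num * x.den * (x.num ^ 2 + x.num * x.den + (x.den : ℤ) ^ 2)) := by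
    rw [← Rat.isSquare_intCast_iff]
    refine ⟨y * x.den ^ 2, ?_⟩
    push_cast
    rw [← Rat.mul_den_eq_num]
    linear_combination -(x.den : ℚ) ^ 4 * h
  obtain ⟨r, f, s, hrf, hnr, hdf, hs⟩ := exists_quartic_of_mul_eq_sq (Rat.num_pos.2 hxpos)
    (by exact_mod_cast x.pos) x.isCoprime_num_den (by rw [hz, sq])
  have hr : r ≠ 0 := by
    rintro rfl
    simp [hx] at hnr
  have hf : f ≠ 0 := by
    rintro rfl
    simp at hdf
  exact ⟨r, f, s, hrf, mul_ne_zero hr hf, hs⟩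

/-- the only rational point on the elliptic curve
`y² = x³ + x² + x` is `(0, 0)`. -/
theorem rational_points_x3_x2_x (x y : ℚ) (h : y ^ 2 = x ^ 3 + x ^ 2 + x) :
    x = 0 ∧ y = 0 := by
  by_cases hx : x = 0
  · subst hx
    exact ⟨rfl, by simpa using h⟩
  obtain ⟨r, f, s, hrf, hrf₀, hs⟩ := exists_quartic_of_rational_point h hx
  exact absurd (mul_eq_zero_of_quartic_eq_sq hrf hs) hrf₀
end

section
/- The only rational points on the quartic curve v² = −u⁴ − 2u² + 3 are (u,v) = (1,0) and (u,v) = (−1,0): for all rational numbers u, v, if v² = −u⁴ − 2u² + 3 then v = 0 and u² = 1. -/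
/-!
Substituting `u = (1 - t) / (1 + t)` turns the quartic into the elliptic curve
`w² = t³ + t² + t`. Writing `t = p / q` in lowest terms, the integers `p`, `q` and
`p² + pq + q²` are pairwise coprime with square product, hence all squares, which yields a
solution of `x⁴ + x²y² + y⁴ = z²`; this equation has no coprime solution with `xy ≠ 0`.

The latter is a Fermat descent. With `x` odd and `y = 2k`, put `X = x² + 2k²`; then
`(z - X)(z + X) = 12k⁴`, the two halves are coprime and are `3D⁴` and `C⁴` in some order.
One order is impossible modulo 4; the other gives the Pythagorean triple
`x² + (2D²)² = (C² - D²)²`, whose parametrization `C² - D² = S⁴ + T⁴`, `D² = S²T²` yields the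
smaller solution `S⁴ + S²T² + T⁴ = C²`.
-/

theorem Int.exists_pow_eq_of_mul_eq_pow_of_pos {a b c : ℤ} {k : ℕ} (hab : IsCoprime a b)
    (h : a * b = c ^ k) (ha : 0 < a) : ∃ d, a = d ^ k := by
  obtain ⟨d, hd⟩ := exists_associated_pow_of_mul_eq_pow' hab h
  rcases Int.associated_iff.mp hd with hd | hd
  · exact ⟨d, hd.symm⟩
  rcases k.even_or_odd with hk | hk
  · exact absurd (hk.pow_nonneg d) (by omega)
  · exact ⟨-d, by rw [hk.neg_pow, hd, neg_neg]⟩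

theorem Int.isCoprime_of_mul_eq_mul_pow {a b c k : ℤ} {n : ℕ} (hc : Squarefree c)
    (h : a * b = c * k ^ n) (hk : IsCoprime (b - a) k) : IsCoprime a b := by
  set d : ℤ := (a.gcd b : ℤ)
  have hda : d ∣ a := Int.gcd_dvd_left ..
  have hdb : d ∣ b := Int.gcd_dvd_right ..
  have hdk : IsCoprime d k := hk.of_isCoprime_of_dvd_left (dvd_sub hdb hda)
  have hunit : IsUnit d :=
    hc d ((hdk.mul_left hdk).pow_right.dvd_of_dvd_mul_right (h ▸ mul_dvd_mul hda hdb))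
  rw [Int.isCoprime_iff_gcd_eq_one]
  rcases Int.isUnit_iff.mp hunit with h1 | h1 <;> omega

theorem Int.exists_eq_three_mul_pow_four_of_mul_eq {a b k : ℤ} (hab : IsCoprime a b)
    (ha : 0 < a) (hb : 0 < b) (h : a * b = 3 * k ^ 4) (h3 : 3 ∣ a) :
    ∃ C D : ℤ, a = 3 * D ^ 4 ∧ b = C ^ 4 ∧ k ^ 2 = C ^ 2 * D ^ 2 := by
  obtain ⟨a, rfl⟩ := h3
  have h' : a * b = k ^ 4 := by linarith
  have hab' : IsCoprime a b := hab.of_isCoprime_of_dvd_left (dvd_mul_left a 3)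
  obtain ⟨D, rfl⟩ := Int.exists_pow_eq_of_mul_eq_pow_of_pos hab' h' (by linarith)
  obtain ⟨C, rfl⟩ := Int.exists_pow_eq_of_mul_eq_pow_of_pos hab'.symm (by rw [mul_comm, h']) hb
  refine ⟨C, D, rfl, rfl, (pow_left_inj₀ (sq_nonneg k) (by positivity) two_ne_zero).mp ?_⟩
  linear_combination -h'

theorem Int.sq_add_sq_ne_four_mul_of_odd {x y w : ℤ} (hx : Odd x) : x ^ 2 + y ^ 2 ≠ 4 * w := by
  obtain ⟨a, rfl⟩ := hx
  intro h
  have key : ∀ a b c : ZMod 4, (2 * a + 1) ^ 2 + b ^ 2 ≠ 4 * c := by decide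
  exact key a y w (by simpa using congrArg (Int.cast : ℤ → ZMod 4) h)

theorem Int.pow_four_add_sq_mul_sq_add_pow_four_ne_sq_of_odd {x y z : ℤ} (hx : Odd x)
    (hy : Odd y) : x ^ 4 + x ^ 2 * y ^ 2 + y ^ 4 ≠ z ^ 2 := by
  obtain ⟨a, rfl⟩ := hx
  obtain ⟨b, rfl⟩ := hy
  intro h
  have key : ∀ a b c : ZMod 4,
      (2 * a + 1) ^ 4 + (2 * a + 1) ^ 2 * (2 * b + 1) ^ 2 + (2 * b + 1) ^ 4 ≠ c ^ 2 := by
    decide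
  exact key a b z (by simpa using congrArg (Int.cast : ℤ → ZMod 4) h)

theorem Int.exists_eq_pow_four_add_pow_four_of_sq_add_sq {m D z : ℤ} (hm : Odd m)
    (hmD : IsCoprime m D) (hD : D ≠ 0) (hz : 0 < z) (h : m ^ 2 + (2 * D ^ 2) ^ 2 = z ^ 2) :
    ∃ S T : ℤ, IsCoprime S T ∧ S * T ≠ 0 ∧ D ^ 2 = S ^ 2 * T ^ 2 ∧ z = S ^ 4 + T ^ 4 := by
  have hm2 : IsCoprime m 2 :=
    (Int.prime_two.coprime_iff_not_dvd.mpr (Int.two_dvd_ne_zero.mpr (Int.odd_iff.mp hm))).symm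
  have hpyth : PythagoreanTriple m (2 * D ^ 2) z := by
    unfold PythagoreanTriple; linear_combination h
  obtain ⟨s, t, -, hst, rfl, hcop, -, hs⟩ := hpyth.coprime_classification'
    (Int.isCoprime_iff_gcd_eq_one.mp (hm2.mul_right hmD.pow_right)) (Int.odd_iff.mp hm) hz
  have hst' : s * t = D ^ 2 := by linarith
  have hD2 : 0 < D ^ 2 := by positivity
  have hs : 0 < s := lt_of_le_of_ne hs (by rintro rfl; simp at hst'; linarith)
  have ht : 0 < t := pos_of_mul_pos_right (hst' ▸ hD2) hs.le
  have hcop : IsCoprime s t := Int.isCoprime_iff_gcd_eq_one.mpr hcop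
  obtain ⟨S, rfl⟩ := Int.exists_pow_eq_of_mul_eq_pow_of_pos hcop hst' hs
  obtain ⟨T, rfl⟩ := Int.exists_pow_eq_of_mul_eq_pow_of_pos hcop.symm (by rw [mul_comm, hst']) ht
  refine ⟨S, T, (IsCoprime.pow_iff two_pos two_pos).mp hcop,
    fun hST ↦ hD2.ne' (by rw [← hst', ← mul_pow, hST]; ring), by linear_combination -hst', by ring⟩

theorem Int.exists_coprime_mul_eq_three_mul_pow_four {m k f : ℤ} (hmk : IsCoprime m k)
    (hm : Odd m) (hk0 : k ≠ 0) (hf : 0 < f) (h : f ^ 2 = (m ^ 2 + 2 * k ^ 2) ^ 2 + 12 * k ^ 4) :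
    ∃ P Q : ℤ, IsCoprime P Q ∧ 0 < P ∧ 0 < Q ∧ P * Q = 3 * k ^ 4 ∧ f = P + Q ∧
      m ^ 2 + 2 * k ^ 2 = Q - P := by
  obtain ⟨X, hX⟩ : ∃ X, m ^ 2 + 2 * k ^ 2 = X := ⟨_, rfl⟩
  rw [hX] at h ⊢
  have hXodd : Odd X := hX ▸ hm.pow.add_even (even_two_mul _)
  have hfodd : Odd f := by
    have : Odd (f ^ 2) := h ▸ hXodd.pow.add_even ⟨6 * k ^ 4, by ring⟩
    exact (Int.odd_pow.mp this).resolve_right two_ne_zero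
  obtain ⟨P, hP⟩ := hfodd.sub_odd hXodd
  obtain ⟨Q, hQ⟩ := hfodd.add_odd hXodd
  have hPQ : P * Q = 3 * k ^ 4 :=
    mul_left_cancel₀ four_ne_zero (by linear_combination h - (f + X) * hP - 2 * P * hQ)
  have hX0 : 0 < X := by rw [← hX]; positivity
  have hXf : X < f :=
    lt_of_pow_lt_pow_left₀ 2 hf.le (by rw [h]; exact lt_add_of_pos_right _ (by positivity))
  have hXk : IsCoprime X k := by
    rw [← hX, show m ^ 2 + 2 * k ^ 2 = m ^ 2 + 2 * k * k by ring]
    exact hmk.pow_left.add_mul_right_left _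
  refine ⟨P, Q, Int.isCoprime_of_mul_eq_mul_pow Int.prime_three.squarefree hPQ ?_,
    by linarith, by linarith, hPQ, by linarith, by linarith⟩
  rwa [show Q - P = X by linarith]

theorem Int.exists_smaller_of_pow_four_add_sq_mul_sq_add_pow_four_eq_sq {m n f : ℤ}
    (hmn : IsCoprime m n) (hm : Odd m) (hn : Even n) (hn0 : n ≠ 0) (hf : 0 < f)
    (h : m ^ 4 + m ^ 2 * n ^ 2 + n ^ 4 = f ^ 2) :
    ∃ S T C : ℤ, IsCoprime S T ∧ S * T ≠ 0 ∧ S ^ 4 + S ^ 2 * T ^ 2 + T ^ 4 = C ^ 2 ∧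
      C.natAbs < f.natAbs := by
  obtain ⟨k, rfl⟩ := hn.two_dvd
  have hk0 : k ≠ 0 := by rintro rfl; simp at hn0
  have hm0 : m ≠ 0 := by rintro rfl; simp at hm
  have hmk : IsCoprime m k := hmn.of_isCoprime_of_dvd_right (dvd_mul_left k 2)
  obtain ⟨P, Q, hcop, hP0, hQ0, hPQ, rfl, hX⟩ :=
    Int.exists_coprime_mul_eq_three_mul_pow_four hmk hm hk0 hf (by linear_combination -h)
  rcases Int.prime_three.dvd_or_dvd (hPQ ▸ dvd_mul_right 3 (k ^ 4) : (3 : ℤ) ∣ P * Q) with h3 | h3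
  · obtain ⟨C, D, rfl, rfl, hk⟩ := Int.exists_eq_three_mul_pow_four_of_mul_eq hcop hP0 hQ0 hPQ h3
    have hD : D ≠ 0 := by rintro rfl; simp at hk; exact hk0 hk
    have hmD : IsCoprime m D := hmk.of_isCoprime_of_dvd_right
      ((Int.pow_dvd_pow_iff two_ne_zero).mp (hk ▸ dvd_mul_left _ _))
    have hm2 : 0 < m ^ 2 := by positivity
    have hz : 0 < C ^ 2 - D ^ 2 := by nlinarith [sq_nonneg D]
    obtain ⟨S, T, hST, hST0, hD2, hz⟩ :=
      Int.exists_eq_pow_four_add_pow_four_of_sq_add_sq hm hmD hD hz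
        (by linear_combination hX - 2 * hk)
    refine ⟨S, T, C, hST, hST0, by linear_combination -hz - hD2, Int.natAbs_lt_iff_sq_lt.mpr ?_⟩
    have hD4 : 0 < D ^ 4 := by positivity
    have hC : C ^ 2 ≤ C ^ 4 := (Int.le_self_sq (C ^ 2)).trans_eq (by ring)
    nlinarith [Int.le_self_sq (3 * D ^ 4 + C ^ 4)]
  · exfalso
    obtain ⟨C, D, rfl, rfl, hk⟩ := Int.exists_eq_three_mul_pow_four_of_mul_eq hcop.symm hQ0 hP0
      (by rw [mul_comm, hPQ]) h3
    exact Int.sq_add_sq_ne_four_mul_of_odd hm (y := C ^ 2 + D ^ 2) (w := D ^ 4)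
      (by linear_combination hX - 2 * hk)

theorem Int.odd_even_of_pow_four_add_sq_mul_sq_add_pow_four_eq_sq {x y z : ℤ}
    (hxy : IsCoprime x y) (h : x ^ 4 + x ^ 2 * y ^ 2 + y ^ 4 = z ^ 2) :
    Odd x ∧ Even y ∨ Even x ∧ Odd y := by
  rcases Int.even_or_odd x with hx | hx <;> rcases Int.even_or_odd y with hy | hy
  · exact absurd (hxy.isUnit_of_dvd' hx.two_dvd hy.two_dvd) Int.prime_two.not_isUnit
  · exact .inr ⟨hx, hy⟩
  · exact .inl ⟨hx, hy⟩
  · exact absurd h (Int.pow_four_add_sq_mul_sq_add_pow_four_ne_sq_of_odd hx hy)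

theorem Int.mul_eq_zero_of_pow_four_add_sq_mul_sq_add_pow_four_eq_sq {x y z : ℤ}
    (hxy : IsCoprime x y) (h : x ^ 4 + x ^ 2 * y ^ 2 + y ^ 4 = z ^ 2) : x * y = 0 := by
  induction hn : z.natAbs using Nat.strong_induction_on generalizing x y z with
  | _ n ih =>
  by_contra hxy0
  have hx0 : x ≠ 0 := left_ne_zero_of_mul hxy0
  have hy0 : y ≠ 0 := right_ne_zero_of_mul hxy0
  have hz : 0 < |z| := abs_pos.mpr <| by
    rintro rfl
    have : 0 < x ^ 4 + x ^ 2 * y ^ 2 + y ^ 4 := by positivity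
    simp_all
  replace h : x ^ 4 + x ^ 2 * y ^ 2 + y ^ 4 = |z| ^ 2 := by rwa [sq_abs]
  obtain ⟨S, T, C, hST, hST0, hC, hlt⟩ : ∃ S T C : ℤ, IsCoprime S T ∧ S * T ≠ 0 ∧
      S ^ 4 + S ^ 2 * T ^ 2 + T ^ 4 = C ^ 2 ∧ C.natAbs < |z|.natAbs := by
    rcases Int.odd_even_of_pow_four_add_sq_mul_sq_add_pow_four_eq_sq hxy h with ⟨hx, hy⟩ | ⟨hx, hy⟩
    · exact Int.exists_smaller_of_pow_four_add_sq_mul_sq_add_pow_four_eq_sq hxy hx hy hy0 hz h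
    · exact Int.exists_smaller_of_pow_four_add_sq_mul_sq_add_pow_four_eq_sq hxy.symm hy hx hx0 hz
        (by linear_combination h)
  rw [Int.natAbs_abs, hn] at hlt
  exact hST0 (ih _ hlt hST hC rfl)

theorem Int.eq_zero_of_mul_mul_sq_add_mul_add_sq_eq_sq {p q c : ℤ} (hpq : IsCoprime p q)
    (hq : 0 < q) (h : p * q * (p ^ 2 + p * q + q ^ 2) = c ^ 2) : p = 0 := by
  by_contra hp
  obtain ⟨R, hR⟩ : ∃ R, p ^ 2 + p * q + q ^ 2 = R := ⟨_, rfl⟩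
  have hR0 : 0 < R := by nlinarith [sq_nonneg (2 * p + q)]
  have hp0 : 0 < p := by
    have hpqR : 0 ≤ p * q * R := hR ▸ h ▸ sq_nonneg c
    exact (nonneg_of_mul_nonneg_left (nonneg_of_mul_nonneg_left hpqR hR0) hq).lt_of_ne' hp
  have hpR : IsCoprime p R := by
    rw [← hR, show p ^ 2 + p * q + q ^ 2 = q ^ 2 + p * (p + q) by ring]
    exact hpq.pow_right.add_mul_left_right _
  have hqR : IsCoprime q R := by
    rw [← hR, show p ^ 2 + p * q + q ^ 2 = p ^ 2 + q * (q + p) by ring]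
    exact hpq.symm.pow_right.add_mul_left_right _
  obtain ⟨x, rfl⟩ := Int.exists_pow_eq_of_mul_eq_pow_of_pos (hpq.mul_right hpR)
    (by rw [← h, hR]; ring) hp0
  obtain ⟨y, rfl⟩ := Int.exists_pow_eq_of_mul_eq_pow_of_pos (hpq.symm.mul_right hqR)
    (by rw [← h, hR]; ring) hq
  obtain ⟨z, rfl⟩ := Int.exists_pow_eq_of_mul_eq_pow_of_pos (hpR.symm.mul_right hqR.symm)
    (by rw [← h, hR]; ring) hR0
  have hxy := Int.mul_eq_zero_of_pow_four_add_sq_mul_sq_add_pow_four_eq_sq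
    (z := z) ((IsCoprime.pow_iff two_pos two_pos).mp hpq) (by linear_combination hR)
  rcases mul_eq_zero.mp hxy with rfl | rfl <;> simp_all

theorem Rat.eq_zero_of_sq_eq_cube_add_sq_add_self {t w : ℚ} (h : w ^ 2 = t ^ 3 + t ^ 2 + t) :
    t = 0 := by
  have hwt : (w * t.den ^ 2) ^ 2 =
      ((t.num * t.den * (t.num ^ 2 + t.num * t.den + t.den ^ 2) : ℤ) : ℚ) := by
    rw [← Rat.num_div_den t] at h
    field_simp at h
    push_cast
    linear_combination (t.den : ℚ) * h
  obtain ⟨c, hc⟩ := IsIntegrallyClosed.isIntegral_iff.mp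
    (IsIntegral.of_pow (R := ℤ) two_pos (by rw [hwt]; exact isIntegral_algebraMap))
  rw [algebraMap_int_eq, eq_intCast] at hc
  rw [← hc] at hwt
  exact Rat.num_eq_zero.mp <| Int.eq_zero_of_mul_mul_sq_add_mul_add_sq_eq_sq
    t.isCoprime_num_den (by exact_mod_cast t.den_pos) (by exact_mod_cast hwt.symm)

/-- the only rational points on the quartic `v² = −u⁴ − 2u² + 3`
are `(±1, 0)`. -/
theorem rational_points_quartic (u v : ℚ)
    (h : v ^ 2 = -u ^ 4 - 2 * u ^ 2 + 3) :
    v = 0 ∧ u ^ 2 = 1 := by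
  have hu : u ^ 2 = 1 := by
    by_cases hu : u = -1
    · rw [hu]; norm_num
    have hu1 : 1 + u ≠ 0 := fun h0 ↦ hu (by linarith)
    have ht : (1 - u) / (1 + u) = 0 := Rat.eq_zero_of_sq_eq_cube_add_sq_add_self
      (w := v / (1 + u) ^ 2) (by field_simp; linear_combination h)
    rw [div_eq_zero_iff, or_iff_left hu1, sub_eq_zero] at ht
    rw [← ht]; norm_num
  exact ⟨pow_eq_zero_iff two_ne_zero |>.mp (by linear_combination h - (u ^ 2 + 3) * hu), hu⟩
end

section
/- For all rational numbers p and t, if p²(1 + t²) = (2p² − 1)² then t = 0. (Consequently, an equilateral hyperbolic triangle with rational side lengths, or with rational angles, has no rational median/area bisector: taking p = cosh(a/2) in the rational-sides case, or p = sin(α/2) in the rational-angles case, and t = sinh(m) where m is the median, a rational median would yield a rational solution with t > 0.) -/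
/-!
Writing `p = a / b` in lowest terms, the hypothesis says that
`(a² - b²)(4a² - b²) = (a b t)²`, so it suffices to show that this quartic form is never a
nonzero square when `a b ≠ 0`. This is an infinite descent on `4a² + b²`. After dividing out
`gcd a b` and treating even `b` (where `(b / 2, a)` is again a solution), coprimality forces
`a² - b² = d r²` and `4a² - b² = d s²` with `d ∈ {±1, ±3}`. The classes `d = 1` and `d = -3` are
impossible modulo 4, `d = 3` gives the smaller solution `(r, s)`, and `d = -1` means
`b² = a² + r² = (2a)² + s²`. Then `b = K² + L²` with `a = K L` and `b = m² + n²` with `a = 2 m n`;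
splitting `K L = (2m) n` as `K = k₁ k₂`, `L = g δ`, `2m = k₁ g`, `n = k₂ δ` and comparing the two
expressions for `4b` gives `4δ²(k₂² - g²) = k₁²(4k₂² - g²)`, so `(k₂, g)` is a smaller solution.
-/

namespace Int

lemma isSquare_of_isSquare_mul_sq {x d : ℤ} (hd : d ≠ 0) (h : IsSquare (x * d ^ 2)) :
    IsSquare x := by
  obtain ⟨y, hy⟩ := h
  rw [← Rat.isSquare_intCast_iff]
  exact ⟨y / d, by field_simp; exact_mod_cast hy.trans (sq y).symm⟩

lemma not_four_dvd_sq_add_sq_of_odd {b : ℤ} (hb : Odd b) (s : ℤ) : ¬ 4 ∣ b ^ 2 + s ^ 2 := by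
  rintro ⟨m, hm⟩
  obtain ⟨k, rfl⟩ := hb
  rcases even_or_odd' s with ⟨j, rfl | rfl⟩
  · have : 4 * (k ^ 2 + k + j ^ 2) + 1 = 4 * m := by linear_combination hm
    omega
  · have : 4 * (k ^ 2 + k + j ^ 2 + j) + 2 = 4 * m := by linear_combination hm
    omega

lemma exists_eq_sign_mul_sq_of_isSquare_mul {A B : ℤ} (hAB : IsCoprime A B) (h0 : A * B ≠ 0)
    (hsq : IsSquare (A * B)) :
    ∃ ε r s : ℤ, (ε = 1 ∨ ε = -1) ∧ A = ε * r ^ 2 ∧ B = ε * s ^ 2 := by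
  obtain ⟨N, hN⟩ := hsq
  obtain ⟨r, hr⟩ := sq_of_isCoprime hAB (hN.trans (sq N).symm)
  obtain ⟨s, hs⟩ := sq_of_isCoprime hAB.symm (by rw [mul_comm, hN, sq])
  have hpos : 0 < A * B := lt_of_le_of_ne (hN ▸ mul_self_nonneg N) h0.symm
  rcases hr with rfl | rfl <;> rcases hs with rfl | rfl
  · exact ⟨1, r, s, .inl rfl, by ring, by ring⟩
  · nlinarith [sq_nonneg (r * s)]
  · nlinarith [sq_nonneg (r * s)]
  · exact ⟨-1, r, s, .inr rfl, by ring, by ring⟩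

lemma exists_eq_sq_add_sq_of_sq_eq {b c s : ℤ} (hb : 0 < b) (hbo : Odd b) (hbc : IsCoprime b c)
    (h : b ^ 2 = (2 * c) ^ 2 + s ^ 2) : ∃ x y : ℤ, b = x ^ 2 + y ^ 2 ∧ c = x * y := by
  have hs : Odd s := by
    have : Odd (s ^ 2) := by
      rw [show s ^ 2 = b ^ 2 - 2 * (2 * c ^ 2) by linear_combination -h]
      exact hbo.pow.sub_even (even_two_mul _)
    exact (odd_pow' two_ne_zero).mp this
  have hsc : IsCoprime s (2 * c) := by
    refine (isCoprime_two_right.mpr hs).mul_right ?_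
    have : IsCoprime (s ^ 2 + c * (4 * c)) c := by
      rw [show s ^ 2 + c * (4 * c) = b ^ 2 by linear_combination -h]
      exact hbc.pow_left
    exact (IsCoprime.pow_left_iff two_pos).mp this.of_add_mul_left_left
  obtain ⟨m, n, -, hc, hb', -⟩ := PythagoreanTriple.coprime_classification'
    (x := s) (y := 2 * c) (z := b) (by unfold PythagoreanTriple; linear_combination -h)
    (isCoprime_iff_gcd_eq_one.mp hsc) (odd_iff.mp hs) hb
  exact ⟨m, n, hb', by linarith⟩

end Int

def quartic (a b : ℤ) : ℤ := (a ^ 2 - b ^ 2) * (4 * a ^ 2 - b ^ 2)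

def IsNontrivialSolution (a b : ℤ) : Prop :=
  a ≠ 0 ∧ b ≠ 0 ∧ quartic a b ≠ 0 ∧ IsSquare (quartic a b)

lemma quartic_mul_right (a b g : ℤ) : quartic (a * g) (b * g) = quartic a b * (g ^ 2) ^ 2 := by
  unfold quartic; ring

lemma quartic_two_mul_right (a c : ℤ) : quartic a (2 * c) = quartic c a * 2 ^ 2 := by
  unfold quartic; ring

lemma exists_smaller_of_mul_eq_two_mul_mul {b K L m n : ℤ} (hKL : K * L ≠ 0)
    (hmul : K * L = 2 * m * n) (hbKL : b = K ^ 2 + L ^ 2) (hbmn : b = m ^ 2 + n ^ 2) :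
    ∃ a' b', IsNontrivialSolution a' b' ∧ 4 * a' ^ 2 + b' ^ 2 < 4 * (K * L) ^ 2 + b ^ 2 := by
  obtain ⟨k₁, k₂, ⟨g, hg⟩, ⟨δ, rfl⟩, rfl⟩ :=
    exists_dvd_and_dvd_of_dvd_mul (hmul ▸ dvd_mul_right K L)
  have hL : L = g * δ := by
    refine mul_left_cancel₀ (left_ne_zero_of_mul hKL) ?_
    linear_combination hmul + k₂ * δ * hg
  subst hL
  simp only [mul_ne_zero_iff] at hKL
  obtain ⟨⟨hk₁, hk₂⟩, hg0, hδ⟩ := hKL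
  have hkey : 4 * δ ^ 2 * (k₂ ^ 2 - g ^ 2) = k₁ ^ 2 * (4 * k₂ ^ 2 - g ^ 2) := by
    linear_combination 4 * hbKL - 4 * hbmn - (2 * m + k₁ * g) * hg
  refine ⟨k₂, g, ⟨hk₂, hg0, ?_, ?_⟩, ?_⟩
  · intro hQ0
    have h1 : k₂ ^ 2 - g ^ 2 = 0 ∧ 4 * k₂ ^ 2 - g ^ 2 = 0 := by
      rcases mul_eq_zero.mp hQ0 with h | h
      · exact ⟨h, by simpa [h, hk₁] using hkey.symm⟩
      · exact ⟨by simpa [h, hδ] using hkey, h⟩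
    exact hk₂ (pow_eq_zero_iff two_ne_zero |>.mp (by linarith [h1.1, h1.2]))
  · refine Int.isSquare_of_isSquare_mul_sq (d := 2 * δ) (mul_ne_zero two_ne_zero hδ)
      ⟨k₁ * (4 * k₂ ^ 2 - g ^ 2), ?_⟩
    unfold quartic
    linear_combination (4 * k₂ ^ 2 - g ^ 2) * hkey
  · have one_le_sq {x : ℤ} (hx : x ≠ 0) : 1 ≤ x ^ 2 :=
      (one_le_sq_iff_one_le_abs x).mpr (Int.one_le_abs hx)
    have hK := one_le_sq (mul_ne_zero hk₁ hk₂)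
    have hL := one_le_sq (mul_ne_zero hg0 hδ)
    calc 4 * k₂ ^ 2 + g ^ 2 ≤ 4 * (k₁ * k₂) ^ 2 + (g * δ) ^ 2 := by
          rw [mul_pow, mul_pow]
          nlinarith [one_le_sq hk₁, one_le_sq hδ, sq_nonneg k₂, sq_nonneg g]
      _ < 4 * (k₁ * k₂ * (g * δ)) ^ 2 + b := by rw [hbKL, mul_pow (k₁ * k₂)]; nlinarith
      _ ≤ 4 * (k₁ * k₂ * (g * δ)) ^ 2 + b ^ 2 := by linarith [Int.le_self_sq b]

lemma exists_smaller_of_sq_eq_sq_add_sq {a b r s : ℤ} (ha : a ≠ 0) (hb : 0 < b) (hbo : Odd b)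
    (hab : IsCoprime a b) (hr : b ^ 2 = a ^ 2 + r ^ 2) (hs : b ^ 2 = (2 * a) ^ 2 + s ^ 2) :
    ∃ a' b', IsNontrivialSolution a' b' ∧ 4 * a' ^ 2 + b' ^ 2 < 4 * a ^ 2 + b ^ 2 := by
  obtain ⟨K, L, hbKL, rfl⟩ := Int.exists_eq_sq_add_sq_of_sq_eq hb hbo hab.symm hs
  have ha2 : Even (K * L) := by
    by_contra hodd
    rw [Int.not_even_iff_odd, Int.odd_mul] at hodd
    exact Int.not_even_iff_odd.mpr hbo (hbKL ▸ hodd.1.pow.add_odd hodd.2.pow)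
  obtain ⟨e, he⟩ := even_iff_two_dvd.mp ha2
  obtain ⟨m, n, hbmn, rfl⟩ := Int.exists_eq_sq_add_sq_of_sq_eq hb hbo
    (he ▸ hab.symm).of_mul_right_right (he ▸ hr)
  exact exists_smaller_of_mul_eq_two_mul_mul ha (by rw [he, mul_assoc]) hbKL hbmn

namespace IsNontrivialSolution

variable {a b : ℤ}

lemma exists_eq_mul_sq (h : IsNontrivialSolution a b) (hab : IsCoprime a b) :
    ∃ d r s : ℤ, (d = 1 ∨ d = -1 ∨ d = 3 ∨ d = -3) ∧
      a ^ 2 - b ^ 2 = d * r ^ 2 ∧ 4 * a ^ 2 - b ^ 2 = d * s ^ 2 := by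
  obtain ⟨-, -, hQ, hsq⟩ := h
  obtain ⟨u, v, huv⟩ := hab.pow (m := 2) (n := 2)
  have h3 : (u + v) * (4 * a ^ 2 - b ^ 2) + (a ^ 2 - b ^ 2) * (-u - 4 * v) = 3 := by
    linear_combination 3 * huv
  by_cases h3A : 3 ∣ a ^ 2 - b ^ 2
  · obtain ⟨A, hA⟩ := h3A
    have hB : 4 * a ^ 2 - b ^ 2 = 3 * (A + a ^ 2) := by linear_combination hA
    have hQ' : quartic a b = A * (A + a ^ 2) * 3 ^ 2 := by
      rw [quartic, hA, hB]; ring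
    have hcop : IsCoprime A (A + a ^ 2) := ⟨-u - 4 * v, u + v, by linear_combination huv + v * hA⟩
    obtain ⟨ε, r, s, hε, hr, hs⟩ := Int.exists_eq_sign_mul_sq_of_isSquare_mul hcop
      (fun h0 => hQ (by rw [hQ', h0, zero_mul]))
      (Int.isSquare_of_isSquare_mul_sq three_ne_zero (hQ' ▸ hsq))
    refine ⟨3 * ε, r, s, ?_, by rw [hA, hr]; ring, by rw [hB, hs]; ring⟩
    rcases hε with rfl | rfl <;> norm_num
  · have h3cop : IsCoprime (a ^ 2 - b ^ 2) 3 :=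
      (Int.prime_three.coprime_iff_not_dvd.mpr h3A).symm
    rw [← h3] at h3cop
    obtain ⟨ε, r, s, hε, hr, hs⟩ := Int.exists_eq_sign_mul_sq_of_isSquare_mul
      h3cop.of_add_mul_left_right.of_mul_right_right hQ hsq
    exact ⟨ε, r, s, by rcases hε with rfl | rfl <;> simp, hr, hs⟩

lemma exists_smaller_of_not_isCoprime (h : IsNontrivialSolution a b) (hab : ¬ IsCoprime a b) :
    ∃ a' b', IsNontrivialSolution a' b' ∧ 4 * a' ^ 2 + b' ^ 2 < 4 * a ^ 2 + b ^ 2 := by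
  obtain ⟨ha, hb, hQ, hsq⟩ := h
  obtain ⟨g, a', b', hg, hcop, rfl, rfl⟩ := Int.exists_gcd_one' (Int.gcd_pos_of_ne_zero_left b ha)
  have hg1 : 1 < g := by
    refine lt_of_le_of_ne hg fun hg1 => hab ?_
    subst hg1
    simpa [Int.isCoprime_iff_gcd_eq_one] using hcop
  have hg0 : (g : ℤ) ≠ 0 := by positivity
  refine ⟨a', b', ⟨left_ne_zero_of_mul ha, left_ne_zero_of_mul hb, ?_, ?_⟩, ?_⟩
  · exact fun h0 => hQ (by rw [quartic_mul_right, h0, zero_mul])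
  · exact Int.isSquare_of_isSquare_mul_sq (pow_ne_zero 2 hg0) (quartic_mul_right .. ▸ hsq)
  · have : 0 < 4 * a' ^ 2 + b' ^ 2 := by have := left_ne_zero_of_mul ha; positivity
    have : (1 : ℤ) < (g : ℤ) ^ 2 := by exact_mod_cast Nat.one_lt_pow two_ne_zero hg1
    nlinarith

lemma exists_smaller_of_even (h : IsNontrivialSolution a b) (hb : Even b) :
    ∃ a' b', IsNontrivialSolution a' b' ∧ 4 * a' ^ 2 + b' ^ 2 < 4 * a ^ 2 + b ^ 2 := by
  obtain ⟨ha, hb0, hQ, hsq⟩ := h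
  obtain ⟨c, rfl⟩ := even_iff_two_dvd.mp hb
  refine ⟨c, a, ⟨right_ne_zero_of_mul hb0, ha, ?_, ?_⟩, ?_⟩
  · exact fun h0 => hQ (by rw [quartic_two_mul_right, h0, zero_mul])
  · exact Int.isSquare_of_isSquare_mul_sq two_ne_zero (quartic_two_mul_right .. ▸ hsq)
  · have : 0 < a ^ 2 := by positivity
    linarith

lemma exists_smaller_of_odd (h : IsNontrivialSolution a b) (hab : IsCoprime a b) (hb : Odd b) :
    ∃ a' b', IsNontrivialSolution a' b' ∧ 4 * a' ^ 2 + b' ^ 2 < 4 * a ^ 2 + b ^ 2 := by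
  obtain ⟨d, r, s, hd, hr, hs⟩ := h.exists_eq_mul_sq hab
  obtain ⟨ha, hb0, hQ, -⟩ := h
  rcases hd with rfl | rfl | rfl | rfl
  · exact absurd ⟨a ^ 2, by linear_combination -hs⟩ (Int.not_four_dvd_sq_add_sq_of_odd hb s)
  · simpa only [sq_abs] using exists_smaller_of_sq_eq_sq_add_sq (r := r) (s := s) ha
      (abs_pos.mpr hb0) (odd_abs.mpr hb) hab.abs_right
      (by rw [sq_abs]; linear_combination -hr) (by rw [sq_abs]; linear_combination -hs)
  · have hrs : quartic r s = (a * b) ^ 2 := by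
      rw [quartic, show r ^ 2 - s ^ 2 = -a ^ 2 by linarith,
        show 4 * r ^ 2 - s ^ 2 = -b ^ 2 by linarith]
      ring
    have hr0 : r ≠ 0 := by
      rintro rfl
      exact hQ (by rw [quartic, hr]; ring)
    have hs0 : s ≠ 0 := by
      rintro rfl
      exact hQ (by rw [quartic, hs]; ring)
    refine ⟨r, s, ⟨hr0, hs0, by rw [hrs]; positivity, ⟨a * b, by rw [hrs, sq]⟩⟩, ?_⟩
    have : 0 < b ^ 2 := by positivity
    nlinarith
  · exact absurd ⟨r ^ 2, by linarith⟩ (Int.not_four_dvd_sq_add_sq_of_odd hb s)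

lemma exists_smaller (h : IsNontrivialSolution a b) :
    ∃ a' b', IsNontrivialSolution a' b' ∧ 4 * a' ^ 2 + b' ^ 2 < 4 * a ^ 2 + b ^ 2 := by
  by_cases hab : IsCoprime a b
  · rcases Int.even_or_odd b with hb | hb
    · exact h.exists_smaller_of_even hb
    · exact h.exists_smaller_of_odd hab hb
  · exact h.exists_smaller_of_not_isCoprime hab

end IsNontrivialSolution

theorem not_isNontrivialSolution (a b : ℤ) : ¬ IsNontrivialSolution a b := by
  induction hn : (4 * a ^ 2 + b ^ 2).toNat using Nat.strong_induction_on generalizing a b with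
  | _ n ih =>
    intro h
    obtain ⟨a', b', h', hlt⟩ := h.exists_smaller
    have : 0 < 4 * a' ^ 2 + b' ^ 2 := by have := h'.1; positivity
    exact ih _ (hn ▸ (Int.toNat_lt_toNat (this.trans hlt)).mpr hlt) a' b' rfl h'

theorem eq_zero_of_isSquare_sq_sub_one_mul {x : ℚ} (hx : x ≠ 0)
    (h : IsSquare ((x ^ 2 - 1) * (4 * x ^ 2 - 1))) : (x ^ 2 - 1) * (4 * x ^ 2 - 1) = 0 := by
  have hQ : (quartic x.num x.den : ℚ) =
      (x ^ 2 - 1) * (4 * x ^ 2 - 1) * ((x.den : ℚ) ^ 2) ^ 2 := by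
    push_cast [quartic, ← Rat.mul_den_eq_num x]
    ring
  by_contra hne
  refine not_isNontrivialSolution x.num x.den
    ⟨Rat.num_ne_zero.mpr hx, by positivity, fun h0 => hne ?_, ?_⟩
  · simpa [h0, x.den_ne_zero] using hQ
  · rw [← Rat.isSquare_intCast_iff, hQ]
    exact h.mul ⟨_, sq _⟩

/-- for all rationals `p, t`, if `p²(1 + t²) = (2p² − 1)²` then
`t = 0`; consequently an equilateral hyperbolic triangle with rational side
lengths or rational angles has no rational median/area bisector. -/
theorem no_rational_median_equilateral (p t : ℚ)
    (h : p ^ 2 * (1 + t ^ 2) = (2 * p ^ 2 - 1) ^ 2) :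
    t = 0 := by
  have hp : p ≠ 0 := by rintro rfl; norm_num at h
  have hpt : (p ^ 2 - 1) * (4 * p ^ 2 - 1) = (p * t) ^ 2 := by linear_combination -h
  have h0 := eq_zero_of_isSquare_sq_sub_one_mul hp ⟨p * t, hpt.trans (sq _)⟩
  rw [hpt] at h0
  simpa [hp] using h0
end

section
/- Let u, v, w, t be rational numbers satisfying t² = (v²w + w + vw² + v)²u² − 4v²w²(u²+1)². Define x = 2w(u²wv² + u²(w²+1)v − 2u⁴w − 3u²w + ut − 2w) and y = 2uw(2u²w²v³ + 3wu²(w²+1)v² + (−4u⁴w² + u²w⁴ − 4u²w² + 2uwt + u² − 4w²)v + u(w²+1)(uw+t)). Then y² = x³ + (u²w⁴ + 2(4u⁴+7u²+4)w² + u²)x² + 8(u²+1)²w²(u²w⁴ + 2(u²+1)²w² + u²)x + 16u²w⁴(u²+1)⁴(w²+1)², i.e. (x,y) is a rational point on the median curve E_{u,w}. -/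
/-- a rational solution `(u, v, w, t)` of the median condition
`t² = (v²w + w + vw² + v)²u² − 4v²w²(u²+1)²` yields, via the change of
variables, a rational point on the median curve `E_{u,w}`. -/
theorem median_to_curve (u v w t : ℚ)
    (hH : t ^ 2 = (v ^ 2 * w + w + v * w ^ 2 + v) ^ 2 * u ^ 2
      - 4 * v ^ 2 * w ^ 2 * (u ^ 2 + 1) ^ 2)
    (x y : ℚ)
    (hx : x = 2 * w * (u ^ 2 * w * v ^ 2 + u ^ 2 * (w ^ 2 + 1) * v
      - 2 * u ^ 4 * w - 3 * u ^ 2 * w + u * t - 2 * w))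
    (hy : y = 2 * u * w * (2 * u ^ 2 * w ^ 2 * v ^ 3
      + 3 * w * u ^ 2 * (w ^ 2 + 1) * v ^ 2
      + (-4 * u ^ 4 * w ^ 2 + u ^ 2 * w ^ 4 - 4 * u ^ 2 * w ^ 2
          + 2 * u * w * t + u ^ 2 - 4 * w ^ 2) * v
      + u * (w ^ 2 + 1) * (u * w + t))) :
    y ^ 2 = x ^ 3
      + (u ^ 2 * w ^ 4 + 2 * (4 * u ^ 4 + 7 * u ^ 2 + 4) * w ^ 2 + u ^ 2) * x ^ 2
      + 8 * (u ^ 2 + 1) ^ 2 * w ^ 2 *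
          (u ^ 2 * w ^ 4 + 2 * (u ^ 2 + 1) ^ 2 * w ^ 2 + u ^ 2) * x
      + 16 * u ^ 2 * w ^ 4 * (u ^ 2 + 1) ^ 4 * (w ^ 2 + 1) ^ 2 := by
  subst hx hy
  linear_combination (16 * u ^ 2 * w ^ 4 - 8 * u ^ 3 * w ^ 3 * t + 24 * u ^ 4 * w ^ 4
    - 8 * u ^ 4 * v * w ^ 3 - 8 * u ^ 4 * v * w ^ 5 - 8 * u ^ 4 * v ^ 2 * w ^ 4
    + 16 * u ^ 6 * w ^ 4) * hH
end
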